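/- arXiv:2509.08688 — 6 statements merged into one kernel-verified Lean document; each statement's English description precedes it below -/
import Mathlib

section
/- Let I ⊆ S = K[x₁,…,xₙ] be a monomial ideal and let x^p y^q be a monomial in the minimal generating set G(I), where p ≥ 1, q ≥ 1, and x, y are variables. Suppose every f ∈ G(I) satisfies: (1) if f ≠ x^p y^q then y does not divide f, and (2) if x divides f then deg_x(f) ≥ p. Then (I^t : x^p y^q) = I^{t−1} for all t ≥ 2. -/
open MvPolynomial

/-! If a product of `t` generators divides `u · x^p y^q`, one factor can be dropped so that the
remaining `t - 1` divide `u`: drop `x^p y^q` itself if it occurs; otherwise no factor involves `y`,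
and dropping a factor of positive `x`-degree (hence of `x`-degree at least `p`), or any factor if
none involves `x`, absorbs `x^p y^q`. As `I^t` is the monomial ideal generated by the products of
`t` generators, this gives `(I^t : x^p y^q) ⊆ I^(t-1)`; the reverse inclusion holds because
`x^p y^q ∈ I`. -/

namespace MvPolynomial

variable {σ R : Type*} [CommSemiring R]

theorem span_monomial_image_pow (D : Set (σ →₀ ℕ)) (k : ℕ) :
    Ideal.span ((fun d => monomial d (1 : R)) '' D) ^ k =
      Ideal.span ((fun s : Multiset (σ →₀ ℕ) => monomial s.sum (1 : R)) ''
        {s | Multiset.card s = k ∧ ∀ d ∈ s, d ∈ D}) := by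
  induction k with
  | zero =>
    have : {s : Multiset (σ →₀ ℕ) | Multiset.card s = 0 ∧ ∀ d ∈ s, d ∈ D} = {0} := by
      ext s
      simp +contextual [Multiset.card_eq_zero]
    rw [pow_zero, this, Set.image_singleton]
    simp [Ideal.one_eq_top]
  | succ k ih =>
    rw [pow_succ, ih, Ideal.span_mul_span']
    congr 1
    ext f
    constructor
    · rintro ⟨_, ⟨s, ⟨hcard, hsD⟩, rfl⟩, _, ⟨d, hd, rfl⟩, rfl⟩
      refine ⟨d ::ₘ s, ⟨by simp [hcard], ?_⟩, by simp [monomial_mul, add_comm]⟩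
      simpa [hd] using hsD
    · rintro ⟨s, ⟨hcard, hsD⟩, rfl⟩
      obtain ⟨d, s, rfl, hs⟩ := Multiset.card_eq_succ_iff.mp hcard
      refine ⟨_, ⟨s, ⟨hs, fun a ha => hsD a (Multiset.mem_cons_of_mem ha)⟩, rfl⟩, _,
        ⟨d, hsD d (Multiset.mem_cons_self d s), rfl⟩, ?_⟩
      simp [monomial_mul, add_comm]

theorem mem_span_monomial_image_pow {f : MvPolynomial σ R} {D : Set (σ →₀ ℕ)} {k : ℕ} :
    f ∈ Ideal.span ((fun d => monomial d (1 : R)) '' D) ^ k ↔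
      ∀ e ∈ f.support, ∃ s : Multiset (σ →₀ ℕ),
        Multiset.card s = k ∧ (∀ d ∈ s, d ∈ D) ∧ s.sum ≤ e := by
  rw [span_monomial_image_pow, ← Set.image_image (fun d => monomial d (1 : R)) Multiset.sum,
    mem_ideal_span_monomial_image]
  simp [and_assoc]

end MvPolynomial

theorem Finsupp.multiset_sum_apply_eq_zero {σ M : Type*} [AddCommMonoid M]
    {s : Multiset (σ →₀ M)} {z : σ} (h : ∀ b ∈ s, b z = 0) : s.sum z = 0 := by
  by_contra hne
  obtain ⟨b, hb, hbz⟩ := Finsupp.mem_support_multiset_sum z (Finsupp.mem_support_iff.mpr hne)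
  exact Finsupp.mem_support_iff.mp hbz (h b hb)

section Exponents

variable {σ : Type*} [DecidableEq σ]

theorem Multiset.sum_erase_le_of_le_add {s : Multiset (σ →₀ ℕ)} {a e m : σ →₀ ℕ} (ha : a ∈ s)
    (hs : s.sum ≤ e + m) (h : ∀ z, m z ≤ a z ∨ (s.erase a).sum z = 0) :
    (s.erase a).sum ≤ e := by
  intro z
  have hz := hs z
  rw [← Multiset.sum_erase ha] at hz
  simp only [Finsupp.add_apply] at hz
  rcases h z with h | h <;> omega

theorem exists_mem_sum_erase_le {D : Set (σ →₀ ℕ)} {x y : σ} {p q : ℕ}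
    (hD1 : ∀ d ∈ D, d ≠ Finsupp.single x p + Finsupp.single y q → d y = 0)
    (hD2 : ∀ d ∈ D, d x ≠ 0 → p ≤ d x)
    {s : Multiset (σ →₀ ℕ)} (hs : s ≠ 0) (hsD : ∀ d ∈ s, d ∈ D) {e : σ →₀ ℕ}
    (hse : s.sum ≤ e + (Finsupp.single x p + Finsupp.single y q)) :
    ∃ a ∈ s, (s.erase a).sum ≤ e := by
  set m := Finsupp.single x p + Finsupp.single y q
  by_cases hm : m ∈ s
  · exact ⟨m, hm, Multiset.sum_erase_le_of_le_add hm hse fun _ => Or.inl le_rfl⟩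
  have hy : ∀ b ∈ s, b y = 0 := fun b hb => hD1 b (hsD b hb) (ne_of_mem_of_not_mem hb hm)
  obtain ⟨a, ha, hax⟩ : ∃ a ∈ s, ∀ b ∈ s, b x ≠ 0 → a x ≠ 0 := by
    by_cases h : ∃ a ∈ s, a x ≠ 0
    · obtain ⟨a, ha, hax⟩ := h
      exact ⟨a, ha, fun _ _ _ => hax⟩
    · obtain ⟨a, ha⟩ := Multiset.exists_mem_of_ne_zero hs
      exact ⟨a, ha, fun b hb hbx => (h ⟨b, hb, hbx⟩).elim⟩
  refine ⟨a, ha, Multiset.sum_erase_le_of_le_add ha hse fun z => ?_⟩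
  have vanish : (∀ b ∈ s, b z = 0) → (s.erase a).sum z = 0 := fun h =>
    Finsupp.multiset_sum_apply_eq_zero fun b hb => h b (Multiset.mem_of_mem_erase hb)
  by_cases hzy : z = y
  · exact Or.inr (vanish (hzy ▸ hy))
  by_cases hzx : z = x
  · subst hzx
    by_cases ha0 : a z = 0
    · exact Or.inr (vanish fun b hb => not_not.mp fun hb0 => hax b hb hb0 ha0)
    · left
      simpa [m, Finsupp.single_apply, Ne.symm hzy] using hD2 a (hsD a ha) ha0
  · left
    simp [m, Ne.symm hzx, Ne.symm hzy]

end Exponents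

theorem colon_power_monomial_ideal_general {n : ℕ} {K : Type} [Field K]
    (Gset : Set (MvPolynomial (Fin n) K)) (I : Ideal (MvPolynomial (Fin n) K))
    (hmono : ∀ f ∈ Gset, ∃ d : Fin n →₀ ℕ, f = monomial d 1)
    (hspan : I = Ideal.span Gset)
    (x y : Fin n) (p q : ℕ)
    (hmem : (X x) ^ p * (X y) ^ q ∈ Gset)
    (h1 : ∀ f ∈ Gset, f ≠ (X x) ^ p * (X y) ^ q → ¬ ((X y : MvPolynomial (Fin n) K) ∣ f))
    (h2 : ∀ f ∈ Gset, ((X x : MvPolynomial (Fin n) K) ∣ f) → p ≤ f.degreeOf x) :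
    ∀ t : ℕ, 2 ≤ t →
      Submodule.colon (I ^ t) ((Ideal.span {(X x) ^ p * (X y) ^ q} : Ideal (MvPolynomial (Fin n) K)) : Set (MvPolynomial (Fin n) K)) = I ^ (t - 1) := by
  set D : Set (Fin n →₀ ℕ) := {d | monomial d (1 : K) ∈ Gset}
  have hGset : Gset = (fun d => monomial d (1 : K)) '' D := by
    ext f
    exact ⟨fun hf => by obtain ⟨d, rfl⟩ := hmono f hf; exact ⟨d, hf, rfl⟩,
      fun ⟨d, hd, hdf⟩ => hdf ▸ hd⟩
  have hm : (X x) ^ p * (X y) ^ q =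
      monomial (Finsupp.single x p + Finsupp.single y q) (1 : K) := by
    rw [X_pow_eq_monomial, X_pow_eq_monomial, monomial_mul, one_mul]
  have hD1 : ∀ d ∈ D, d ≠ Finsupp.single x p + Finsupp.single y q → d y = 0 := fun d hd hne =>
    not_not.mp fun hdy => h1 _ hd (hm ▸ (monomial_left_injective one_ne_zero).ne hne)
      (X_dvd_monomial.mpr (Or.inr hdy))
  have hD2 : ∀ d ∈ D, d x ≠ 0 → p ≤ d x := fun d hd hdx => by
    simpa [degreeOf_monomial_eq] using h2 _ hd (X_dvd_monomial.mpr (Or.inr hdx))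
  intro t ht
  apply le_antisymm
  · intro f hf
    rw [Ideal.mem_colon_span_singleton, hm] at hf
    rw [hspan, hGset, mem_span_monomial_image_pow] at hf ⊢
    intro e he
    obtain ⟨s, hcard, hsD, hse⟩ := hf (e + _) (by
      rwa [mem_support_iff, coeff_mul_monomial, mul_one, ← mem_support_iff])
    obtain ⟨a, ha, hle⟩ := exists_mem_sum_erase_le hD1 hD2
      (Multiset.card_pos.mp (by omega)) hsD hse
    exact ⟨s.erase a, by rw [Multiset.card_erase_of_mem ha, hcard]; rfl,
      fun d hd => hsD d (Multiset.mem_of_mem_erase hd), hle⟩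
  · intro f hf
    rw [Ideal.mem_colon_span_singleton]
    have hfm := Ideal.mul_mem_mul hf (hspan ▸ Ideal.subset_span hmem : _ ∈ I)
    rwa [← pow_succ, Nat.sub_add_cancel (by omega)] at hfm

/-- **Lemma (colon of powers of a monomial ideal).**
Let `I ⊆ S = K[x₁,…,xₙ]` be a monomial ideal with minimal monomial generating set `Gset`
(encoded: all elements are monomials, they generate `I`, and none divides another).
Let `x^p y^q ∈ Gset` with `p, q ≥ 1` and `x, y` variables, such that every `f ∈ Gset`
satisfies: (1) if `f ≠ x^p y^q` then `y ∤ f`; (2) if `x ∣ f` then `deg_x f ≥ p`.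
Then `(I^t : x^p y^q) = I^(t-1)` for all `t ≥ 2`. -/
theorem colon_power_monomial_ideal {n : ℕ} {K : Type} [Field K]
    (Gset : Set (MvPolynomial (Fin n) K)) (I : Ideal (MvPolynomial (Fin n) K))
    (hmono : ∀ f ∈ Gset, ∃ d : Fin n →₀ ℕ, f = monomial d 1)
    (hspan : I = Ideal.span Gset)
    (hminimal : ∀ f ∈ Gset, ∀ g ∈ Gset, f ≠ g → ¬ f ∣ g)
    (x y : Fin n) (hxy : x ≠ y) (p q : ℕ) (hp : 1 ≤ p) (hq : 1 ≤ q)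
    (hmem : (X x) ^ p * (X y) ^ q ∈ Gset)
    (h1 : ∀ f ∈ Gset, f ≠ (X x) ^ p * (X y) ^ q → ¬ ((X y : MvPolynomial (Fin n) K) ∣ f))
    (h2 : ∀ f ∈ Gset, ((X x : MvPolynomial (Fin n) K) ∣ f) → p ≤ f.degreeOf x) :
    ∀ t : ℕ, 2 ≤ t →
      Submodule.colon (I ^ t) ((Ideal.span {(X x) ^ p * (X y) ^ q} : Ideal (MvPolynomial (Fin n) K)) : Set (MvPolynomial (Fin n) K)) = I ^ (t - 1) :=
  colon_power_monomial_ideal_general Gset I hmono hspan x y p q hmem h1 h2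
end

section
/- Let G be a tree with a weight function ω : E(G) → Z_{>0}, and let (G_ω, r) be an increasing weighted tree (i.e., along every simple path from a leaf to the root r of length at least 2, the edge weights are weakly increasing). If G is not a star graph centered at r, then there exists a longest simple path r = v₀ → v₁ → ⋯ → v_k from r such that: (1) v_k is a leaf; (2) if u ∈ N_G(v_{k−2}) is a non-leaf then ω(v_{k−1}v_{k−2}) ≤ ω(v_{k−2}u); (3) the only non-leaf neighbor of v_{k−1} is v_{k−2}; (4) ω(v_{k−1}u) ≤ ω(v_{k−1}v_{k−2}) for all u ∈ N_G(v_{k−1}); and (5) ω(v_{k−1}v_k) ≤ ω(v_{k−1}u) for all u ∈ N_G(v_{k−1}). -/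
/-!
Let `k` be the maximal length of a path from `r`; `k ≥ 2` because `G` is not a star centred at
`r`. Among the paths `r ⋯ z → y → w` of length `k` take one minimising `(ω(zy), ω(yw))`
lexicographically. By maximality of `k`, `w` and every neighbour `u ≠ z` of `y` are leaves,
giving (1) and (3); monotonicity of `ω` along the path from such a leaf to `r` gives (4), and
along the path from `w` it gives (2) for the neighbour of `z` nearer to `r`. Every other non-leaf
neighbour `u` of `z` starts a path `r ⋯ z → u → x` of length `k`, so `ω(zy) ≤ ω(zu)` by
minimality; and for `u ≠ z` next to `y`, the path `r ⋯ z → y → u` has the same first key, so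
`ω(yw) ≤ ω(yu)`, which is (5).
-/

open MvPolynomial SimpleGraph

/-- The weight function `ω` on the edges of `G` is weakly increasing along every
simple path from a leaf to the root `r`. -/
def IsIncreasingRoot {n : ℕ} (G : SimpleGraph (Fin n)) [DecidableRel G.Adj]
    (ω : Sym2 (Fin n) → ℕ) (r : Fin n) : Prop :=
  ∀ v : Fin n, G.degree v = 1 → ∀ p : G.Walk v r, p.IsPath →
    ∀ i : ℕ, i + 2 < p.support.length →
      ω s(p.support.getD i v, p.support.getD (i + 1) v) ≤
        ω s(p.support.getD (i + 1) v, p.support.getD (i + 2) v)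

/-- The weight function `ω` is strictly increasing along every simple path from a leaf
to the root `r`. -/
def IsStrictlyIncreasingRoot {n : ℕ} (G : SimpleGraph (Fin n)) [DecidableRel G.Adj]
    (ω : Sym2 (Fin n) → ℕ) (r : Fin n) : Prop :=
  ∀ v : Fin n, G.degree v = 1 → ∀ p : G.Walk v r, p.IsPath →
    ∀ i : ℕ, i + 2 < p.support.length →
      ω s(p.support.getD i v, p.support.getD (i + 1) v) <
        ω s(p.support.getD (i + 1) v, p.support.getD (i + 2) v)

/-- A vertex `v₂` is special: there is a simple path `v₁ → v₂ → v₃ → ⋯ → r` from a leaf `v₁`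
of length at least 2 with `ω(v₁v₂) = ω(v₂v₃)`. -/
def IsSpecialVertex {n : ℕ} (G : SimpleGraph (Fin n)) [DecidableRel G.Adj]
    (ω : Sym2 (Fin n) → ℕ) (r : Fin n) (v₂ : Fin n) : Prop :=
  ∃ (v₁ : Fin n) (p : G.Walk v₁ r), G.degree v₁ = 1 ∧ p.IsPath ∧ 2 ≤ p.length ∧
    p.support.getD 1 v₁ = v₂ ∧
    ω s(p.support.getD 0 v₁, p.support.getD 1 v₁) =
      ω s(p.support.getD 1 v₁, p.support.getD 2 v₁)

/-- An edge `uv` is special: there is a simple path `v₁ → u → v → ⋯ → r` (at least 3 vertices)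
with `ω(v₁u) = ω(uv)`. -/
def IsSpecialEdge {n : ℕ} (G : SimpleGraph (Fin n))
    (ω : Sym2 (Fin n) → ℕ) (r : Fin n) (e : Sym2 (Fin n)) : Prop :=
  ∃ (v₁ : Fin n) (p : G.Walk v₁ r), p.IsPath ∧ 2 ≤ p.length ∧
    e = s(p.support.getD 1 v₁, p.support.getD 2 v₁) ∧
    ω s(p.support.getD 0 v₁, p.support.getD 1 v₁) =
      ω s(p.support.getD 1 v₁, p.support.getD 2 v₁)

/-- `μ(v)`: the maximal weight of an edge at `v`. -/
def muWeight {n : ℕ} (G : SimpleGraph (Fin n)) [DecidableRel G.Adj]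
    (ω : Sym2 (Fin n) → ℕ) (v : Fin n) : ℕ :=
  (G.neighborFinset v).sup fun u => ω s(u, v)

/-- The set `A(G_ω)` of vertices admitting a simple path `v = v₁ → ⋯ → v_{2m}` (`m ≥ 1`)
with `ω(v_{2m-1}v_{2m}) < μ(v_{2m})`. -/
def Aset {n : ℕ} (G : SimpleGraph (Fin n)) [DecidableRel G.Adj]
    (ω : Sym2 (Fin n) → ℕ) : Set (Fin n) :=
  {v | ∃ (m : ℕ) (w : Fin n) (p : G.Walk v w), 1 ≤ m ∧ p.IsPath ∧
    p.support.length = 2 * m ∧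
    ω s(p.support.getD (2 * m - 2) v, w) < muWeight G ω w}

namespace SimpleGraph

variable {V : Type*} {G : SimpleGraph V}

namespace Walk

lemma support_getD_eq_getVert {u v : V} (p : G.Walk u v) {i : ℕ} (hi : i ≤ p.length) (d : V) :
    p.support.getD i d = p.getVert i := by
  simp [List.getD_eq_getElem?_getD, ← getVert_eq_support_getElem? p hi]

lemma support_getD_length_sub_one_concat {u v w : V} (p : G.Walk u v) (h : G.Adj v w) (d : V) :
    (p.concat h).support.getD ((p.concat h).length - 1) d = v := by
  rw [support_getD_eq_getVert _ (Nat.sub_le _ _)]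
  exact penultimate_concat p h

lemma support_getD_length_sub_two_concat_concat {u z y v : V} (q : G.Walk u z) (hzy : G.Adj z y)
    (hyv : G.Adj y v) (d : V) :
    ((q.concat hzy).concat hyv).support.getD (((q.concat hzy).concat hyv).length - 2) d = z := by
  rw [support_getD_eq_getVert _ (Nat.sub_le _ _)]
  simp [concat_eq_append, getVert_append]

lemma exists_eq_concat_concat {u v : V} (p : G.Walk u v) (hp : 2 ≤ p.length) :
    ∃ (z y : V) (q : G.Walk u z) (hzy : G.Adj z y) (hyv : G.Adj y v),
      p = (q.concat hzy).concat hyv := by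
  have hp₁ : ¬ p.Nil := by rw [← length_eq_zero_iff]; omega
  have hp₂ : ¬ p.dropLast.Nil := by rw [← length_eq_zero_iff, length_dropLast]; omega
  exact ⟨_, _, _, adj_penultimate hp₂, adj_penultimate hp₁,
    by rw [concat_dropLast, concat_dropLast]⟩

end Walk

open Walk

lemma IsAcyclic.isPath_concat (hG : G.IsAcyclic) {u v w : V} {p : G.Walk u v} (hp : p.IsPath)
    (h : G.Adj v w) (hw : w ≠ p.penultimate) : (p.concat h).IsPath :=
  hp.concat (fun hmem => hw (hG.eq_penultimate_of_adj_end hp h hmem)) h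

variable (G) in
lemma exists_isPath_forall_length_le [Finite V] (r : V) :
    ∃ (w : V) (p : G.Walk r w), p.IsPath ∧
      ∀ (w' : V) (q : G.Walk r w'), q.IsPath → q.length ≤ p.length := by
  have := Fintype.ofFinite V
  set S := {l | ∃ (w : V) (p : G.Walk r w), p.IsPath ∧ p.length = l}
  have hbdd : BddAbove S := ⟨Fintype.card V, by rintro _ ⟨w, p, hp, rfl⟩; exact hp.length_lt.le⟩
  obtain ⟨w, p, hp, hlen⟩ := Nat.sSup_mem (s := S) ⟨0, r, nil, .nil, rfl⟩ hbdd
  exact ⟨w, p, hp, fun w' q hq => hlen ▸ le_csSup hbdd ⟨w', q, hq, rfl⟩⟩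

lemma IsAcyclic.degree_eq_one_of_forall_length_le [G.LocallyFinite] (hG : G.IsAcyclic)
    {r w : V} {p : G.Walk r w} (hp : p.IsPath)
    (hmax : ∀ (w' : V) (q : G.Walk r w'), q.IsPath → q.length ≤ p.length) (hne : ¬ p.Nil) :
    G.degree w = 1 := by
  rw [degree_eq_one_iff_existsUnique_adj]
  refine ⟨p.penultimate, (p.adj_penultimate hne).symm, fun x hx => ?_⟩
  by_contra hx'
  simpa using hmax x _ (hG.isPath_concat hp hx hx')

lemma exists_adj_ne_of_degree_ne_one [G.LocallyFinite] {u z : V} (huz : G.Adj u z)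
    (hu : G.degree u ≠ 1) : ∃ x, G.Adj u x ∧ x ≠ z := by
  by_contra! h
  exact hu (degree_eq_one_iff_existsUnique_adj.mpr ⟨z, huz, h⟩)

lemma IsAcyclic.exists_isPath_two_le_length (hG : G.IsAcyclic) (hconn : G.Preconnected) {r : V}
    (h : ¬ ∀ e ∈ G.edgeSet, r ∈ e) : ∃ (w : V) (p : G.Walk r w), p.IsPath ∧ 2 ≤ p.length := by
  push Not at h
  obtain ⟨e, he, hre⟩ := h
  induction e using Sym2.ind with | _ a b => ?_
  have hab : G.Adj a b := he
  simp only [Sym2.mem_iff, not_or] at hre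
  obtain ⟨q, hq⟩ := (hconn r a).exists_isPath
  have hq₀ : q.length ≠ 0 := fun h0 => hre.1 (eq_of_length_eq_zero h0)
  by_cases hb : b = q.penultimate
  · refine ⟨a, q, hq, ?_⟩
    by_contra! hlt
    exact hre.2 (by rw [hb, penultimate, show q.length - 1 = 0 by omega, getVert_zero])
  · exact ⟨b, _, hG.isPath_concat hq hab hb, by rw [length_concat]; omega⟩

def pathEnds (G : SimpleGraph V) (r : V) (k : ℕ) : Set (V × V × V) :=
  {t | ∃ (q : G.Walk r t.1) (h₁ : G.Adj t.1 t.2.1) (h₂ : G.Adj t.2.1 t.2.2),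
    ((q.concat h₁).concat h₂).IsPath ∧ q.length + 2 = k}

lemma Walk.IsPath.pathEnds_nonempty {r w : V} {p : G.Walk r w} (hp : p.IsPath)
    (h : 2 ≤ p.length) : (pathEnds G r p.length).Nonempty := by
  obtain ⟨z, y, q, hzy, hyw, rfl⟩ := p.exists_eq_concat_concat h
  exact ⟨(z, y, w), q, hzy, hyw, hp, by simp⟩

lemma IsAcyclic.mk_mem_pathEnds (hG : G.IsAcyclic) {r z y w : V} {q : G.Walk r z}
    {hzy : G.Adj z y} (hq : (q.concat hzy).IsPath) (hyw : G.Adj y w) (hw : w ≠ z) :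
    (z, y, w) ∈ pathEnds G r (q.length + 2) :=
  ⟨q, hzy, hyw, hG.isPath_concat hq hyw (by rwa [penultimate_concat]), rfl⟩

lemma IsAcyclic.degree_eq_one_of_mem_pathEnds [G.LocallyFinite] (hG : G.IsAcyclic) {r : V}
    {k : ℕ} (hmax : ∀ (w : V) (p : G.Walk r w), p.IsPath → p.length ≤ k) {t : V × V × V}
    (ht : t ∈ pathEnds G r k) : G.degree t.2.2 = 1 := by
  obtain ⟨q, h₁, h₂, hp, rfl⟩ := ht
  exact hG.degree_eq_one_of_forall_length_le hp (fun w' p' hp' => (hmax w' p' hp').trans (by simp))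
    (by rw [← length_eq_zero_iff]; simp)

def endWeights {α : Type*} (ω : Sym2 V → α) (t : V × V × V) : α ×ₗ α :=
  toLex (ω s(t.1, t.2.1), ω s(t.2.1, t.2.2))

section LongestPathEnd

variable {r z y w : V} {q : G.Walk r z} {hzy : G.Adj z y} {hyw : G.Adj y w}
  {α : Type*} [LinearOrder α] {ω : Sym2 V → α}

lemma IsAcyclic.mem_pathEnds_of_adj (hG : G.IsAcyclic) (hp : ((q.concat hzy).concat hyw).IsPath)
    {u : V} (hyu : G.Adj y u) (huz : u ≠ z) : (z, y, u) ∈ pathEnds G r (q.length + 2) :=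
  hG.mk_mem_pathEnds ((concat_isPath_iff _).mp hp).1 hyu huz

lemma IsAcyclic.weight_le_of_adj_of_degree_ne_one [G.LocallyFinite] (hG : G.IsAcyclic)
    (hp : ((q.concat hzy).concat hyw).IsPath)
    (hmin : ∀ t ∈ pathEnds G r (q.length + 2), endWeights ω (z, y, w) ≤ endWeights ω t)
    {u : V} (hzu : G.Adj z u) (hu : G.degree u ≠ 1) (hup : u ≠ q.penultimate) :
    ω s(y, z) ≤ ω s(z, u) := by
  have hq := ((concat_isPath_iff _).mp ((concat_isPath_iff _).mp hp).1).1
  obtain ⟨x, hux, hxz⟩ := exists_adj_ne_of_degree_ne_one hzu.symm hu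
  have := hmin _ (hG.mk_mem_pathEnds (hG.isPath_concat hq hzu hup) hux hxz)
  simp only [endWeights, Prod.Lex.toLex_le_toLex] at this
  rw [Sym2.eq_swap]
  exact this.elim le_of_lt (·.1.le)

lemma IsAcyclic.weight_last_le_of_adj (hG : G.IsAcyclic) (hp : ((q.concat hzy).concat hyw).IsPath)
    (hmin : ∀ t ∈ pathEnds G r (q.length + 2), endWeights ω (z, y, w) ≤ endWeights ω t)
    {u : V} (hyu : G.Adj y u) (huz : u ≠ z) : ω s(y, w) ≤ ω s(y, u) := by
  have := hmin _ (hG.mem_pathEnds_of_adj hp hyu huz)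
  simpa only [endWeights, Prod.Lex.toLex_le_toLex, lt_self_iff_false, true_and, false_or]
    using this

end LongestPathEnd

end SimpleGraph

open SimpleGraph.Walk

section IncreasingRoot

variable {n : ℕ} {G : SimpleGraph (Fin n)} [DecidableRel G.Adj] {ω : Sym2 (Fin n) → ℕ}
  {r : Fin n}

lemma IsIncreasingRoot.weight_getVert_le (hroot : IsIncreasingRoot G ω r) {v : Fin n}
    (hv : G.degree v = 1) {p : G.Walk v r} (hp : p.IsPath) {i : ℕ} (hi : i + 2 ≤ p.length) :
    ω s(p.getVert i, p.getVert (i + 1)) ≤ ω s(p.getVert (i + 1), p.getVert (i + 2)) := by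
  have := hroot v hv p hp i (by rw [length_support]; omega)
  rwa [p.support_getD_eq_getVert (by omega), p.support_getD_eq_getVert (by omega),
    p.support_getD_eq_getVert hi] at this

lemma IsIncreasingRoot.weight_le_of_mem_pathEnds (hroot : IsIncreasingRoot G ω r) {k : ℕ}
    {z y u : Fin n} (ht : (z, y, u) ∈ pathEnds G r k) (hu : G.degree u = 1) :
    ω s(y, u) ≤ ω s(y, z) := by
  obtain ⟨q, hzy, hyu, hp, -⟩ := ht
  have := hroot.weight_getVert_le hu hp.reverse (i := 0) (by simp)
  rw [Sym2.eq_swap]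
  simpa [reverse_concat] using this

lemma IsIncreasingRoot.weight_le_weight_penultimate (hroot : IsIncreasingRoot G ω r)
    {z y w u : Fin n} {q : G.Walk r z} {hzy : G.Adj z y} {hyw : G.Adj y w}
    (hp : ((q.concat hzy).concat hyw).IsPath) (hw : G.degree w = 1) (hzu : G.Adj z u)
    (hup : u = q.penultimate) : ω s(y, z) ≤ ω s(z, u) := by
  have hq : ¬ q.Nil := by
    rintro ⟨⟩
    simp only [penultimate, length_nil] at hup
    exact hzu.ne hup.symm
  have := hroot.weight_getVert_le hw hp.reverse (i := 1)
    (by rw [← length_eq_zero_iff] at hq; simp only [length_reverse, length_concat]; omega)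
  simpa [reverse_concat, hup] using this

end IncreasingRoot

theorem exists_good_longest_path_general {n : ℕ} (G : SimpleGraph (Fin n)) [DecidableRel G.Adj]
    (ω : Sym2 (Fin n) → ℕ) (r : Fin n)
    (htree : G.IsTree)
    (hroot : IsIncreasingRoot G ω r)
    (hnotstar : ¬ ∀ e ∈ G.edgeSet, r ∈ e) :
    ∃ (w : Fin n) (p : G.Walk r w), p.IsPath ∧
      (∀ (w' : Fin n) (q : G.Walk r w'), q.IsPath → q.length ≤ p.length) ∧
      2 ≤ p.length ∧
      -- (1) v_k is a leaf
      G.degree w = 1 ∧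
      -- (2)
      (∀ u ∈ G.neighborSet (p.support.getD (p.length - 2) r), G.degree u ≠ 1 →
        ω s(p.support.getD (p.length - 1) r, p.support.getD (p.length - 2) r) ≤
          ω s(p.support.getD (p.length - 2) r, u)) ∧
      -- (3)
      (∀ u ∈ G.neighborSet (p.support.getD (p.length - 1) r), G.degree u ≠ 1 →
        u = p.support.getD (p.length - 2) r) ∧
      -- (4)
      (∀ u ∈ G.neighborSet (p.support.getD (p.length - 1) r),
        ω s(p.support.getD (p.length - 1) r, u) ≤
          ω s(p.support.getD (p.length - 1) r, p.support.getD (p.length - 2) r)) ∧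
      -- (5)
      (∀ u ∈ G.neighborSet (p.support.getD (p.length - 1) r),
        ω s(p.support.getD (p.length - 1) r, w) ≤ ω s(p.support.getD (p.length - 1) r, u)) := by
  have hG := htree.isAcyclic
  obtain ⟨w₀, p₀, hp₀, hmax⟩ := exists_isPath_forall_length_le G r
  obtain ⟨_, p₁, hp₁, hlong⟩ :=
    hG.exists_isPath_two_le_length htree.connected.preconnected hnotstar
  obtain ⟨⟨z, y, w⟩, ⟨q, hzy, hyw, hp, hlen⟩, hmin⟩ :=
    (pathEnds G r p₀.length).exists_min_image (endWeights ω) (Set.toFinite _)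
      (hp₀.pathEnds_nonempty (hlong.trans (hmax _ p₁ hp₁)))
  rw [← hlen] at hmax hmin
  have hsibling_leaf {u : Fin n} (hyu : G.Adj y u) (huz : u ≠ z) : G.degree u = 1 :=
    hG.degree_eq_one_of_mem_pathEnds hmax (hG.mem_pathEnds_of_adj hp hyu huz)
  have hw : G.degree w = 1 := hG.degree_eq_one_of_mem_pathEnds hmax ⟨q, hzy, hyw, hp, rfl⟩
  have hpen {u : Fin n} (hyu : G.Adj y u) : ω s(y, u) ≤ ω s(y, z) := by
    by_cases huz : u = z
    · rw [huz]
    · exact hroot.weight_le_of_mem_pathEnds (hG.mem_pathEnds_of_adj hp hyu huz)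
        (hsibling_leaf hyu huz)
  refine ⟨w, _, hp, fun w' q' hq' => (hmax w' q' hq').trans (by simp), by simp, hw, ?_⟩
  simp only [support_getD_length_sub_two_concat_concat, support_getD_length_sub_one_concat]
  refine ⟨fun u hzu hu => ?_, fun u hyu hu => ?_, fun u => hpen, fun u hyu => ?_⟩
  · by_cases hup : u = q.penultimate
    · exact hroot.weight_le_weight_penultimate hp hw hzu hup
    · exact hG.weight_le_of_adj_of_degree_ne_one hp hmin hzu hu hup
  · by_contra huz
    exact hu (hsibling_leaf hyu huz)
  · by_cases huz : u = z
    · exact huz ▸ hpen hyw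
    · exact hG.weight_last_le_of_adj hp hmin hyu huz

/-- **Lemma (existence of a good longest path).**
If `(G_ω, r)` is an increasing weighted tree and `G` is not a star centered at `r`,
then there is a longest simple path `r = v₀ → v₁ → ⋯ → v_k` from `r` such that:
(1) `v_k` is a leaf; (2) if `u ∈ N(v_{k-2})` is a non-leaf then `ω(v_{k-1}v_{k-2}) ≤ ω(v_{k-2}u)`;
(3) the only non-leaf neighbor of `v_{k-1}` is `v_{k-2}`;
(4) `ω(v_{k-1}u) ≤ ω(v_{k-1}v_{k-2})` for all `u ∈ N(v_{k-1})`;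
(5) `ω(v_{k-1}v_k) ≤ ω(v_{k-1}u)` for all `u ∈ N(v_{k-1})`. -/
theorem exists_good_longest_path {n : ℕ} (G : SimpleGraph (Fin n)) [DecidableRel G.Adj]
    (ω : Sym2 (Fin n) → ℕ) (r : Fin n)
    (htree : G.IsTree) (hpos : ∀ e ∈ G.edgeSet, 1 ≤ ω e)
    (hroot : IsIncreasingRoot G ω r)
    (hnotstar : ¬ ∀ e ∈ G.edgeSet, r ∈ e) :
    ∃ (w : Fin n) (p : G.Walk r w), p.IsPath ∧
      (∀ (w' : Fin n) (q : G.Walk r w'), q.IsPath → q.length ≤ p.length) ∧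
      2 ≤ p.length ∧
      -- (1) v_k is a leaf
      G.degree w = 1 ∧
      -- (2)
      (∀ u ∈ G.neighborSet (p.support.getD (p.length - 2) r), G.degree u ≠ 1 →
        ω s(p.support.getD (p.length - 1) r, p.support.getD (p.length - 2) r) ≤
          ω s(p.support.getD (p.length - 2) r, u)) ∧
      -- (3)
      (∀ u ∈ G.neighborSet (p.support.getD (p.length - 1) r), G.degree u ≠ 1 →
        u = p.support.getD (p.length - 2) r) ∧
      -- (4)
      (∀ u ∈ G.neighborSet (p.support.getD (p.length - 1) r),
        ω s(p.support.getD (p.length - 1) r, u) ≤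
          ω s(p.support.getD (p.length - 1) r, p.support.getD (p.length - 2) r)) ∧
      -- (5)
      (∀ u ∈ G.neighborSet (p.support.getD (p.length - 1) r),
        ω s(p.support.getD (p.length - 1) r, w) ≤ ω s(p.support.getD (p.length - 1) r, u)) :=
  exists_good_longest_path_general G ω r htree hroot hnotstar
end

section
/- Let (G_ω, r) be an increasing weighted tree, let A(G_ω) = {v ∈ V(G) : there is a simple path v = v₁ → v₂ → ⋯ → v_{2m} with m ≥ 1 and ω(v_{2m−1}v_{2m}) < μ(v_{2m})}, where μ(v) = max{ω(uv) : u ∈ N_G(v)}. For any v ∈ A(G_ω), let v = v₁ → v₂ → ⋯ → v_{2m} be a shortest path witnessing membership in A(G_ω). Then for all i ∈ {1,…,m−1}, the edge v_{2i}v_{2i+1} is a special edge, i.e., v_{2i}v_{2i+1} ∈ S(r, G_ω). -/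
open MvPolynomial SimpleGraph

namespace SpecialAux

variable {n : ℕ} {G : SimpleGraph (Fin n)} {ω : Sym2 (Fin n) → ℕ}

lemma path_unique (htree : G.IsTree) {a b : Fin n} (p q : G.Walk a b)
    (hp : p.IsPath) (hq : q.IsPath) : p = q := by
  obtain ⟨P, -, hun⟩ := htree.existsUnique_path a b
  rw [hun p hp, hun q hq]

lemma getD_default_irrel {α : Type*} (l : List α) {k : ℕ} (hk : k < l.length) (d d' : α) :
    l.getD k d = l.getD k d' := by
  rw [List.getD_eq_getElem _ _ hk, List.getD_eq_getElem _ _ hk]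

lemma support_getD_zero {a b : Fin n} (p : G.Walk a b) (d : Fin n) :
    p.support.getD 0 d = a := by
  rw [p.support_eq_cons]; rfl

lemma support_getD_last {a b : Fin n} (p : G.Walk a b) (d : Fin n) :
    p.support.getD p.length d = b := by
  induction p with
  | nil => rfl
  | cons h q ih => rw [Walk.support_cons, Walk.length_cons, List.getD_cons_succ, ih]

/-- getD of an appended walk's support at index `s.length + j`. -/
lemma getD_append {a b c : Fin n} (s : G.Walk a b) (q : G.Walk b c) {j : ℕ}
    (hj : j < q.support.length) (d d' : Fin n) :
    (s.append q).support.getD (s.length + j) d = q.support.getD j d' := by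
  rw [Walk.support_append]
  cases j with
  | zero =>
    rw [List.getD_append _ _ _ _ (by rw [Walk.length_support]; omega)]
    rw [Nat.add_zero, support_getD_last s d, support_getD_zero q d']
  | succ j =>
    rw [List.getD_append_right _ _ _ _ (by rw [Walk.length_support]; omega)]
    rw [Walk.length_support]
    have he : s.length + (j + 1) - (s.length + 1) = j := by omega
    rw [he, q.support_eq_cons, List.getD_cons_succ]
    have hjt : j < q.support.tail.length := by
      rw [q.support_eq_cons] at hj; simpa using Nat.lt_of_succ_lt_succ (by simpa using hj)
    exact getD_default_irrel _ hjt d d'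

lemma getD_append_left {a b c : Fin n} (s : G.Walk a b) (q : G.Walk b c) {j : ℕ}
    (hj : j < s.support.length) (d d' : Fin n) :
    (s.append q).support.getD j d = s.support.getD j d' := by
  rw [Walk.support_append, List.getD_append _ _ _ _ hj]
  exact getD_default_irrel _ hj d d'

lemma support_getD_adj {a b : Fin n} (p : G.Walk a b) {k : ℕ}
    (hk : k + 1 < p.support.length) (d : Fin n) :
    G.Adj (p.support.getD k d) (p.support.getD (k + 1) d) := by
  induction p generalizing k with
  | nil => simp [Walk.support_nil] at hk
  | cons h q ih =>
    rw [Walk.support_cons] at hk ⊢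
    cases k with
    | zero =>
      rw [List.getD_cons_zero, List.getD_cons_succ, support_getD_zero q d]
      exact h
    | succ k =>
      rw [List.getD_cons_succ, List.getD_cons_succ]
      exact ih (by simpa using Nat.lt_of_succ_lt_succ hk) 

/-- If `b` is adjacent to the start of a path `R` and lies on `R`, it is the second vertex. -/
lemma neighbor_on_path (htree : G.IsTree) {a c : Fin n} (R : G.Walk a c) (hR : R.IsPath)
    {b : Fin n} (hadj : G.Adj a b) (hb : b ∈ R.support) (d : Fin n) :
    R.support.getD 1 d = b := by
  classical
  have hTE : R.takeUntil b hb = Walk.cons hadj Walk.nil :=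
    path_unique htree _ _ (hR.takeUntil hb) (by simp [Walk.cons_isPath_iff, hadj.ne])
  have hspec := R.take_spec hb
  rw [hTE] at hspec
  rw [← hspec, Walk.cons_append, Walk.nil_append, Walk.support_cons, List.getD_cons_succ,
    support_getD_zero]

/-- Length of `takeUntil` equals the index at which the vertex sits in the support. -/
lemma takeUntil_length {x y : Fin n} (W : G.Walk x y) (hW : W.IsPath) {u : Fin n}
    (hu : u ∈ W.support) {k : ℕ} (hk : k < W.support.length) (d : Fin n)
    (h : W.support.getD k d = u) : (W.takeUntil u hu).length = k := by
  classical
  have hspec := W.take_spec hu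
  have hlenW : (W.takeUntil u hu).length + (W.dropUntil u hu).length = W.length := by
    rw [← Walk.length_append, hspec]
  have h1 : ((W.takeUntil u hu).append (W.dropUntil u hu)).support.getD
      ((W.takeUntil u hu).length + 0) d = (W.dropUntil u hu).support.getD 0 d :=
    getD_append _ _ (by rw [Walk.length_support]; omega) d d
  rw [hspec, Nat.add_zero, support_getD_zero] at h1
  have hT : (W.takeUntil u hu).length < W.support.length := by
    rw [Walk.length_support]; omega
  have hnd := hW.support_nodup
  have e1 : W.support[(W.takeUntil u hu).length]'hT = u := by
    rw [← List.getD_eq_getElem _ d hT]; exact h1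
  have e2 : W.support[k]'hk = u := by rw [← List.getD_eq_getElem _ d hk]; exact h
  exact hnd.getElem_inj_iff.mp (e1.trans e2.symm)

/-- Every path to `r` of positive length extends backwards to a path from a leaf. -/
lemma exists_leaf [DecidableRel G.Adj] (htree : G.IsTree) {r : Fin n} :
    ∀ (k : ℕ) (x : Fin n) (q : G.Walk x r), q.IsPath → 1 ≤ q.length → n - q.length ≤ k →
    ∃ (l : Fin n) (s : G.Walk l x), G.degree l = 1 ∧ (s.append q).IsPath := by
  intro k
  induction k with
  | zero =>
    intro x q hq hq1 hk
    exfalso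
    have h1 : q.support.length ≤ n := by
      simpa [Fintype.card_fin] using hq.support_nodup.length_le_card
    rw [Walk.length_support] at h1
    omega
  | succ k ih =>
    intro x q hq hq1 hk
    by_cases hdeg : G.degree x = 1
    · exact ⟨x, Walk.nil, hdeg, by rwa [Walk.nil_append]⟩
    · cases q with
      | nil => simp at hq1
      | cons h q' =>
        rename_i y
        have hy : y ∈ G.neighborFinset x := (G.mem_neighborFinset x y).2 h
        have hcard : 1 < (G.neighborFinset x).card := by
          have h1 : 0 < (G.neighborFinset x).card := Finset.card_pos.2 ⟨y, hy⟩
          have h2 : (G.neighborFinset x).card ≠ 1 := hdeg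
          omega
        obtain ⟨a, ha, b, hb, hab⟩ := Finset.one_lt_card.1 hcard
        obtain ⟨z, hz, hzy⟩ : ∃ z ∈ G.neighborFinset x, z ≠ y := by
          by_cases hay : a = y
          · exact ⟨b, hb, by rw [← hay]; exact fun hh => hab hh.symm⟩
          · exact ⟨a, ha, hay⟩
        have hzx : G.Adj x z := (G.mem_neighborFinset x z).1 hz
        have hzns : z ∉ (Walk.cons h q').support := by
          intro hmem
          apply hzy
          have h1 := neighbor_on_path htree (Walk.cons h q') hq hzx hmem x
          rw [Walk.support_cons, List.getD_cons_succ, support_getD_zero] at h1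
          exact h1.symm
        have hcons : (Walk.cons hzx.symm (Walk.cons h q')).IsPath :=
          (Walk.cons_isPath_iff _ _).2 ⟨hq, hzns⟩
        obtain ⟨l, s, hl, hs⟩ := ih z (Walk.cons hzx.symm (Walk.cons h q')) hcons
          (by rw [Walk.length_cons]; omega)
          (by rw [Walk.length_cons]; rw [Walk.length_cons] at hk ⊢ <;> omega)
        refine ⟨l, s.append (Walk.cons hzx.symm Walk.nil), hl, ?_⟩
        have he : (s.append (Walk.cons hzx.symm Walk.nil)).append (Walk.cons h q')
            = s.append (Walk.cons hzx.symm (Walk.cons h q')) := by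
          rw [← Walk.append_assoc, Walk.cons_append, Walk.nil_append]
        rw [he]
        exact hs

/-- Weights weakly increase along any simple path towards the root. -/
lemma factA [DecidableRel G.Adj] (htree : G.IsTree) {r : Fin n}
    (hroot : IsIncreasingRoot G ω r) (x : Fin n) (q : G.Walk x r) (hq : q.IsPath)
    (i : ℕ) (hi : i + 2 < q.support.length) (d : Fin n) :
    ω s(q.support.getD i d, q.support.getD (i + 1) d) ≤
      ω s(q.support.getD (i + 1) d, q.support.getD (i + 2) d) := by
  have hql : 1 ≤ q.length := by rw [Walk.length_support] at hi; omega
  obtain ⟨l, s, hl, hs⟩ := exists_leaf htree n x q hq hql (by omega)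
  have hlen : (s.append q).support.length = s.length + q.support.length := by
    rw [Walk.length_support, Walk.length_append, Walk.length_support]; omega
  have H := hroot l hl (s.append q) hs (s.length + i) (by omega)
  have e0 : (s.append q).support.getD (s.length + i) l = q.support.getD i d :=
    getD_append s q (by omega) l d
  have e1 : (s.append q).support.getD (s.length + i + 1) l = q.support.getD (i + 1) d := by
    have := getD_append s q (j := i + 1) (by omega) l d
    rwa [← Nat.add_assoc] at this
  have e2 : (s.append q).support.getD (s.length + i + 2) l = q.support.getD (i + 2) d := by
    have := getD_append s q (j := i + 2) (by omega) l d
    rwa [← Nat.add_assoc] at this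
  rwa [e0, e1, e2] at H

lemma getD_one_append {y w r : Fin n} (q : G.Walk y w) (tw : G.Walk w r) (d : Fin n) :
    (1 ≤ q.length → (q.append tw).support.getD 1 d = q.support.getD 1 d) ∧
    (q.length = 0 → (q.append tw).support.getD 1 d = tw.support.getD 1 d) := by
  cases q with
  | nil =>
    refine ⟨fun h => by simp at h, fun _ => by rw [Walk.nil_append]⟩
  | cons h q' =>
    refine ⟨fun _ => ?_, fun hh => by simp [Walk.length_cons] at hh⟩
    rw [Walk.cons_append, Walk.support_cons, Walk.support_cons, List.getD_cons_succ,
      List.getD_cons_succ, support_getD_zero, support_getD_zero]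

/-- Key lemma: the witness path, extended by the tree path from its endpoint to the root,
is still a path (i.e. the witness path heads towards the root). -/
lemma append_isPath [DecidableRel G.Adj] (htree : G.IsTree) {r : Fin n}
    (hroot : IsIncreasingRoot G ω r) {v w : Fin n} {m : ℕ} (p : G.Walk v w)
    (hpath : p.IsPath) (hlen : p.support.length = 2 * m) (hm : 1 ≤ m)
    (hlast : ω s(p.support.getD (2 * m - 2) v, w) < muWeight G ω w)
    (tw : G.Walk w r) (htw : tw.IsPath) :
    ∀ (x : Fin n) (q : G.Walk x w) (s0 : G.Walk v x), p = s0.append q →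
      (q.append tw).IsPath := by
  intro x q
  induction q with
  | nil => intro s0 _; rw [Walk.nil_append]; exact htw
  | cons hadj q' ih =>
    rename_i a1 a2 ww
    intro s0 hps0
    have hcq : (Walk.cons hadj q').IsPath := (hps0 ▸ hpath).of_append_right
    have hq' : q'.IsPath := ((Walk.cons_isPath_iff _ _).1 hcq).1
    have hxx : a1 ∉ q'.support := ((Walk.cons_isPath_iff _ _).1 hcq).2
    have hR : (q'.append tw).IsPath := by
      apply ih p hpath hlen hlast tw htw (s0.append (Walk.cons hadj Walk.nil))
      rw [← Walk.append_assoc, Walk.cons_append, Walk.nil_append]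
      exact hps0
    rw [Walk.cons_append]
    refine (Walk.cons_isPath_iff _ _).2 ⟨hR, ?_⟩
    intro hmem
    have hx1 : (q'.append tw).support.getD 1 v = a1 :=
      neighbor_on_path htree (q'.append tw) hR hadj.symm hmem v
    by_cases hq0 : q'.length = 0
    · -- the bad case: the last edge of `p` points away from the root
      have hx1' : tw.support.getD 1 v = a1 := by
        rw [← (getD_one_append q' tw v).2 hq0]; exact hx1
      -- a1 is the penultimate vertex of p
      have hs0len : s0.length = 2 * m - 2 := by
        have h1 := congrArg Walk.length hps0
        rw [Walk.length_append, Walk.length_cons, hq0] at h1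
        have h2 : p.length + 1 = 2 * m := by rw [← Walk.length_support, hlen]
        omega
      have hxp : p.support.getD (2 * m - 2) v = a1 := by
        have h5 : (s0.append (Walk.cons hadj q')).support.getD (s0.length + 0) v
            = (Walk.cons hadj q').support.getD 0 v :=
          getD_append _ _ (by rw [Walk.length_support]; omega) v v
        rw [← hps0] at h5
        rw [Nat.add_zero, hs0len] at h5
        rw [h5, Walk.support_cons, List.getD_cons_zero]
      -- a1 lies in the tail of tw's support, so tw has length ≥ 1
      have hmem2 : a1 ∈ tw.support.tail := by
        rw [Walk.support_append] at hmem
        rcases List.mem_append.1 hmem with hc | hc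
        · exact absurd hc hxx
        · exact hc
      have htwlen : 2 ≤ tw.support.length := by
        have h1 := List.length_pos_iff.2 (List.ne_nil_of_mem hmem2)
        rw [tw.support_eq_cons]
        simp only [List.length_cons]
        omega
      -- every edge at ww is at most ω s(a1, ww), contradicting hlast
      have hmu : muWeight G ω ww ≤ ω s(a1, ww) := by
        apply Finset.sup_le
        intro u hu
        have huadj : G.Adj ww u := (G.mem_neighborFinset ww u).1 hu
        by_cases huxx : u = a1
        · rw [huxx]
        · have hunot : u ∉ tw.support := by
            intro hmem3
            exact huxx ((neighbor_on_path htree tw htw huadj hmem3 v).symm.trans hx1')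
          have hR2 : (Walk.cons huadj.symm tw).IsPath :=
            (Walk.cons_isPath_iff _ _).2 ⟨htw, hunot⟩
          have hFA := factA htree hroot u (Walk.cons huadj.symm tw) hR2 0
            (by rw [Walk.support_cons]; simp only [List.length_cons]; omega) v
          rw [Walk.support_cons, List.getD_cons_zero, List.getD_cons_succ,
            List.getD_cons_succ, support_getD_zero, hx1'] at hFA
          exact le_trans hFA (le_of_eq (by rw [Sym2.eq_swap]))
      have hcontra := lt_of_lt_of_le hlast hmu
      rw [hxp] at hcontra
      exact absurd rfl (ne_of_lt hcontra)
    · -- a1 would be the second vertex of q', contradicting a1 ∉ q'.support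
      have hx1' : q'.support.getD 1 v = a1 := by
        rw [← (getD_one_append q' tw v).1 (by omega)]; exact hx1
      apply hxx
      have hb : 1 < q'.support.length := by rw [Walk.length_support]; omega
      have hmem4 : q'.support.getD 1 v ∈ q'.support := by
        rw [List.getD_eq_getElem _ _ hb]; exact List.getElem_mem hb
      exact hx1' ▸ hmem4

end SpecialAux

/-- **Lemma.** Let `(G_ω, r)` be an increasing weighted tree and `v ∈ A(G_ω)`. If
`v = v₁ → v₂ → ⋯ → v_{2m}` is a shortest path witnessing `v ∈ A(G_ω)` (i.e. a simple path
with `2m` vertices, `m ≥ 1`, and `ω(v_{2m-1}v_{2m}) < μ(v_{2m})`, of minimal `m`),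
then for all `i ∈ {1,…,m-1}` the edge `v_{2i}v_{2i+1}` is special. -/
theorem special_edges_on_shortest_Aset_witness {n : ℕ} (G : SimpleGraph (Fin n))
    [DecidableRel G.Adj] (ω : Sym2 (Fin n) → ℕ) (r : Fin n)
    (htree : G.IsTree) (hpos : ∀ e ∈ G.edgeSet, 1 ≤ ω e)
    (hroot : IsIncreasingRoot G ω r)
    (v w : Fin n) (m : ℕ) (p : G.Walk v w)
    (hm : 1 ≤ m) (hpath : p.IsPath) (hlen : p.support.length = 2 * m)
    (hlast : ω s(p.support.getD (2 * m - 2) v, w) < muWeight G ω w)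
    (hshortest : ∀ (m' : ℕ) (w' : Fin n) (q : G.Walk v w'), 1 ≤ m' → q.IsPath →
      q.support.length = 2 * m' →
      ω s(q.support.getD (2 * m' - 2) v, w') < muWeight G ω w' → m ≤ m') :
    ∀ i : ℕ, 1 ≤ i → i ≤ m - 1 →
      IsSpecialEdge G ω r s(p.support.getD (2 * i - 1) v, p.support.getD (2 * i) v) := by
  classical
  intro i hi1 hi2
  have him : i < m := by omega
  have hm2 : 2 ≤ m := by omega
  obtain ⟨tw, htw, -⟩ := htree.existsUnique_path w r
  have hfull : (p.append tw).IsPath :=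
    SpecialAux.append_isPath htree hroot p hpath hlen hm hlast tw htw v p Walk.nil
      (Walk.nil_append p).symm
  have hplen : p.length = 2 * m - 1 := by
    have := p.length_support
    omega
  obtain ⟨t, ht⟩ : ∃ t, 2 * i = t + 2 := ⟨2 * i - 2, by omega⟩
  rw [show 2 * i - 1 = t + 1 by omega, ht]
  have htb : t + 2 ≤ 2 * m - 2 := by omega
  -- the three consecutive vertices
  have hbmem : p.support.getD (t + 1) v ∈ p.support := by
    have hb : t + 1 < p.support.length := by rw [hlen]; omega
    have h1 : p.support.getD (t + 1) v = p.support[t + 1]'hb := List.getD_eq_getElem _ _ hb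
    rw [h1]; exact List.getElem_mem hb
  -- Step B : minimality forces μ(b) ≤ ω(ab)
  have hmu : muWeight G ω (p.support.getD (t + 1) v) ≤
      ω s(p.support.getD t v, p.support.getD (t + 1) v) := by
    by_contra hlt
    push_neg at hlt
    have hqpath : (p.takeUntil _ hbmem).IsPath := hpath.takeUntil hbmem
    have hqlen : (p.takeUntil _ hbmem).length = t + 1 :=
      SpecialAux.takeUntil_length p hpath hbmem (by rw [hlen]; omega) v rfl
    have hqsup : (p.takeUntil _ hbmem).support.length = 2 * i := by
      rw [Walk.length_support, hqlen]; omega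
    have hqpre : (p.takeUntil _ hbmem).support.getD (2 * i - 2) v = p.support.getD t v := by
      have hspec := p.take_spec hbmem
      have h6 := SpecialAux.getD_append_left (p.takeUntil _ hbmem) (p.dropUntil _ hbmem)
        (j := t) (by rw [Walk.length_support, hqlen]; omega) v v
      rw [hspec] at h6
      rw [show 2 * i - 2 = t by omega]
      exact h6.symm
    have hcon := hshortest i (p.support.getD (t + 1) v) (p.takeUntil _ hbmem) hi1 hqpath hqsup
      (by rw [hqpre]; exact hlt)
    omega
  -- ω(bc) ≤ μ(b)
  have hadjbc : G.Adj (p.support.getD (t + 1) v) (p.support.getD (t + 2) v) :=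
    SpecialAux.support_getD_adj p (by rw [hlen]; omega) v
  have hsup : ω s(p.support.getD (t + 1) v, p.support.getD (t + 2) v) ≤
      muWeight G ω (p.support.getD (t + 1) v) := by
    have hmem := (G.mem_neighborFinset _ _).2 hadjbc
    have h7 := Finset.le_sup (f := fun u => ω s(u, p.support.getD (t + 1) v)) hmem
    calc ω s(p.support.getD (t + 1) v, p.support.getD (t + 2) v)
        = ω s(p.support.getD (t + 2) v, p.support.getD (t + 1) v) := by rw [Sym2.eq_swap]
      _ ≤ muWeight G ω (p.support.getD (t + 1) v) := h7
  -- Step C : monotonicity towards the root gives ω(ab) ≤ ω(bc)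
  have hfl : 2 * m ≤ (p.append tw).support.length := by
    rw [Walk.length_support, Walk.length_append]; omega
  have hfp : ∀ k, k < 2 * m → (p.append tw).support.getD k v = p.support.getD k v :=
    fun k hk => SpecialAux.getD_append_left p tw (by rw [hlen]; omega) v v
  have hfa := SpecialAux.factA htree hroot v (p.append tw) hfull t (by omega) v
  rw [hfp t (by omega), hfp (t + 1) (by omega), hfp (t + 2) (by omega)] at hfa
  have heq : ω s(p.support.getD t v, p.support.getD (t + 1) v) =
      ω s(p.support.getD (t + 1) v, p.support.getD (t + 2) v) :=
    le_antisymm hfa (le_trans hsup hmu)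
  -- Step D : construct the special-edge witness path
  have hta : t < (p.append tw).support.length := by omega
  have hfa0 : (p.append tw).support.getD t v = p.support.getD t v := hfp t (by omega)
  have hamem : p.support.getD t v ∈ (p.append tw).support := by
    have hmem' : (p.append tw).support.getD t v ∈ (p.append tw).support := by
      rw [List.getD_eq_getElem _ _ hta]; exact List.getElem_mem hta
    exact hfa0 ▸ hmem'
  have hTlen : ((p.append tw).takeUntil _ hamem).length = t :=
    SpecialAux.takeUntil_length _ hfull hamem hta v hfa0
  have hPpath : ((p.append tw).dropUntil _ hamem).IsPath := hfull.dropUntil hamem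
  have hspec := (p.append tw).take_spec hamem
  have hlenP3 : 3 ≤ ((p.append tw).dropUntil _ hamem).length := by
    have h8 := congrArg Walk.length hspec
    rw [Walk.length_append, Walk.length_append, hTlen] at h8
    omega
  have hlenP : 2 ≤ ((p.append tw).dropUntil _ hamem).length := by omega
  have hPs : 4 ≤ ((p.append tw).dropUntil _ hamem).support.length := by
    rw [Walk.length_support]; omega
  have hE : ∀ k, k < 3 → ((p.append tw).dropUntil _ hamem).support.getD k (p.support.getD t v)
      = p.support.getD (t + k) v := by
    intro k hk
    have h9 := SpecialAux.getD_append ((p.append tw).takeUntil _ hamem)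
      ((p.append tw).dropUntil _ hamem) (j := k) (by omega) v (p.support.getD t v)
    rw [hspec, hTlen] at h9
    rw [← h9, hfp (t + k) (by omega)]
  refine ⟨p.support.getD t v, (p.append tw).dropUntil _ hamem, hPpath, hlenP, ?_, ?_⟩
  · rw [hE 1 (by omega), hE 2 (by omega)]
  · rw [hE 0 (by omega), hE 1 (by omega), hE 2 (by omega)]
    simpa using heq
end

section
/- Let (G_ω, r) be an increasing weighted tree with bipartition (U, V) of the underlying tree G, and let A(G_ω) = {v : there is a simple path v = v₁ → ⋯ → v_{2m}, m ≥ 1, with ω(v_{2m−1}v_{2m}) < μ(v_{2m})}. For any two vertices u, v ∈ V(G) \ A(G_ω) and any simple path u = v₁ → v₂ → ⋯ → v_{2m} = v with m ≥ 2, every edge v_{2i}v_{2i+1} for i ∈ {1,…,m−1} is a special edge of (G_ω, r). -/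
/-!
Write `a, b, c, d` for `v_{2i-1}, v_{2i}, v_{2i+1}, v_{2i+2}`. The prefix `u → ⋯ → b` and the
reversed suffix `v → ⋯ → c` both have an even number of vertices, so `u, v ∉ A(G_ω)` gives
`ω(bc) ≤ μ(b) ≤ ω(ab)` and `ω(bc) ≤ μ(c) ≤ ω(cd)`. The tree path from `b` to `r` either leaves
`b` through `c`, so that `a → b → c → ⋯ → r` is a path, or avoids `c`, so that
`d → c → b → ⋯ → r` is one. Extended backwards to a leaf, this path is one along which `ω`
increases, which yields the reverse inequality `ω(ab) ≤ ω(bc)`, resp. `ω(dc) ≤ ω(cb)`, and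
so the equality making `bc` special.
-/


open MvPolynomial SimpleGraph

namespace SimpleGraph

variable {V : Type*} {G : SimpleGraph V}

lemma Walk.support_getD_eq_getVert_s5 {u v : V} (p : G.Walk u v) (d : V) {i : ℕ}
    (hi : i ≤ p.length) : p.support.getD i d = p.getVert i := by
  rw [List.getD_eq_getElem _ _ (by rw [length_support]; omega), support_getElem_eq_getVert]

theorem IsAcyclic.exists_degree_eq_one_isPath_append [Fintype V] [DecidableRel G.Adj]
    (hG : G.IsAcyclic) {a b : V} (Q : G.Walk a b) (hQ : Q.IsPath) (hQ_nil : ¬Q.Nil) :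
    ∃ (ℓ : V) (q : G.Walk ℓ a), G.degree ℓ = 1 ∧ (q.append Q).IsPath := by
  by_cases hdeg : G.degree a = 1
  · exact ⟨a, .nil, hdeg, by simpa using hQ⟩
  have hcard : 1 < (G.neighborFinset a).card := by
    have := (G.degree_pos_iff_exists_adj a).mpr ⟨_, Q.adj_snd hQ_nil⟩
    rw [card_neighborFinset_eq_degree]
    omega
  obtain ⟨a', ha', hne⟩ := Finset.exists_mem_ne hcard Q.snd
  rw [mem_neighborFinset] at ha'
  have hQ' : (Walk.cons ha'.symm Q).IsPath :=
    hQ.cons fun h => hne (hG.eq_snd_of_adj_start hQ ha' h)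
  obtain ⟨ℓ, q, hℓ, hq⟩ :=
    hG.exists_degree_eq_one_isPath_append _ hQ' Walk.not_nil_cons
  exact ⟨ℓ, q.concat ha'.symm, hℓ, by rwa [Walk.concat_append]⟩
termination_by Fintype.card V - Q.length
decreasing_by
  have := hQ.length_lt
  simp only [Walk.length_cons]
  omega

end SimpleGraph

open SimpleGraph.Walk

section

variable {n : ℕ} {G : SimpleGraph (Fin n)} [DecidableRel G.Adj] {ω : Sym2 (Fin n) → ℕ}
  {r : Fin n}

lemma IsIncreasingRoot.weight_le_of_isPath (hroot : IsIncreasingRoot G ω r) (hG : G.IsAcyclic)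
    {a : Fin n} (Q : G.Walk a r) (hQ : Q.IsPath) (hlen : 2 ≤ Q.length) :
    ω s(a, Q.snd) ≤ ω s(Q.snd, Q.getVert 2) := by
  obtain ⟨ℓ, q, hℓ, hqQ⟩ :=
    hG.exists_degree_eq_one_isPath_append Q hQ (by rw [← length_eq_zero_iff]; omega)
  have hvert (j : ℕ) (hj : j ≤ 2) :
      (q.append Q).support.getD (q.length + j) ℓ = Q.getVert j := by
    rw [support_getD_eq_getVert_s5 _ _ (by rw [length_append]; omega), getVert_append,
      if_neg (by omega), Nat.add_sub_cancel_left]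
  have h₀ := hvert 0 (by omega)
  rw [add_zero, getVert_zero] at h₀
  have := hroot ℓ hℓ _ hqQ q.length (by rw [length_support, length_append]; omega)
  rwa [h₀, hvert 1 (by omega), hvert 2 (by omega)] at this

lemma IsIncreasingRoot.isSpecialEdge_of_isPath (hroot : IsIncreasingRoot G ω r) (hG : G.IsAcyclic)
    {a : Fin n} (Q : G.Walk a r) (hQ : Q.IsPath) (hlen : 2 ≤ Q.length)
    (hle : ω s(Q.snd, Q.getVert 2) ≤ ω s(a, Q.snd)) :
    IsSpecialEdge G ω r s(Q.snd, Q.getVert 2) := by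
  refine ⟨a, Q, hQ, hlen, ?_, ?_⟩ <;>
    simp only [support_getD_eq_getVert_s5 Q a (show 0 ≤ Q.length by omega),
      support_getD_eq_getVert_s5 Q a (show 1 ≤ Q.length by omega),
      support_getD_eq_getVert_s5 Q a hlen, getVert_zero]
  exact le_antisymm (hroot.weight_le_of_isPath hG Q hQ hlen) hle

lemma IsIncreasingRoot.isSpecialEdge_of_weight_le (hroot : IsIncreasingRoot G ω r)
    (htree : G.IsTree) {a b c d : Fin n} (hab : G.Adj a b) (hbc : G.Adj b c) (hcd : G.Adj c d)
    (hac : a ≠ c) (hbd : b ≠ d) (hba : ω s(b, c) ≤ ω s(a, b))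
    (hcd' : ω s(b, c) ≤ ω s(c, d)) :
    IsSpecialEdge G ω r s(b, c) := by
  have hG := htree.isAcyclic
  obtain ⟨q, hq, -⟩ := htree.existsUnique_path b r
  by_cases hc : c ∈ q.support
  · have hsnd : c = q.snd := hG.eq_snd_of_adj_start hq hbc hc
    have hQ : (Walk.cons hab q).IsPath :=
      hq.cons fun ha => hac ((hG.eq_snd_of_adj_start hq hab.symm ha).trans hsnd.symm)
    have hlen : 2 ≤ (Walk.cons hab q).length := by
      have : ¬q.Nil := fun h =>
        hbc.ne (show c = b by simpa [nil_iff_support_eq.mp h] using hc).symm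
      rw [← length_eq_zero_iff] at this
      rw [length_cons]
      omega
    simpa [← hsnd] using
      hroot.isSpecialEdge_of_isPath hG _ hQ hlen (by simpa [← hsnd] using hba)
  · have hq' : (Walk.cons hbc.symm q).IsPath := hq.cons hc
    have hQ : (Walk.cons hcd.symm (Walk.cons hbc.symm q)).IsPath :=
      hq'.cons fun hd => hbd (by simpa using (hG.eq_snd_of_adj_start hq' hcd hd).symm)
    simpa [Sym2.eq_swap] using
      hroot.isSpecialEdge_of_isPath hG _ hQ (by simp) (by simpa [Sym2.eq_swap] using hcd')

lemma le_muWeight {v w : Fin n} (h : G.Adj v w) : ω s(w, v) ≤ muWeight G ω v :=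
  Finset.le_sup (f := fun u => ω s(u, v)) ((G.mem_neighborFinset v w).mpr h)

lemma weight_le_of_notMem_Aset {u w x : Fin n} (hu : u ∉ Aset G ω) (q : G.Walk u w)
    (hq : q.IsPath) (hodd : Odd q.length) (hx : G.Adj w x) :
    ω s(x, w) ≤ ω s(q.penultimate, w) := by
  obtain ⟨k, hk⟩ := hodd
  by_contra! h
  refine hu ⟨k + 1, w, q, by omega, hq, by rw [length_support]; omega, ?_⟩
  rw [support_getD_eq_getVert_s5 _ _ (by omega), show 2 * (k + 1) - 2 = q.length - 1 by omega]
  exact h.trans_le (le_muWeight hx)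

end

theorem special_edges_on_path_outside_Aset_general {n : ℕ} (G : SimpleGraph (Fin n))
    [DecidableRel G.Adj] (ω : Sym2 (Fin n) → ℕ) (r : Fin n)
    (htree : G.IsTree)
    (hroot : IsIncreasingRoot G ω r)
    (u v : Fin n) (hu : u ∉ Aset G ω) (hv : v ∉ Aset G ω)
    (m : ℕ) (p : G.Walk u v)
    (hpath : p.IsPath) (hlen : p.support.length = 2 * m) :
    ∀ i : ℕ, 1 ≤ i → i ≤ m - 1 →
      IsSpecialEdge G ω r s(p.support.getD (2 * i - 1) u, p.support.getD (2 * i) u) := by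
  rintro i hi₁ hi₂
  obtain ⟨j, rfl⟩ : ∃ j, i = j + 1 := ⟨i - 1, by omega⟩
  have hplen : p.length = 2 * m - 1 := by have := p.length_support; omega
  have hadj (k : ℕ) (hk : k < p.length) : G.Adj (p.getVert k) (p.getVert (k + 1)) :=
    p.adj_getVert_succ hk
  have hne (k l : ℕ) (hk : k ≤ p.length) (hl : l ≤ p.length) (hkl : k ≠ l) :
      p.getVert k ≠ p.getVert l := fun h => hkl (hpath.getVert_injOn hk hl h)
  have hprefix : ω s(p.getVert (2 * j + 1), p.getVert (2 * j + 2)) ≤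
      ω s(p.getVert (2 * j), p.getVert (2 * j + 1)) := by
    have := weight_le_of_notMem_Aset hu (p.take (2 * j + 1)) (hpath.take _)
      ⟨j, by rw [take_length]; omega⟩ (hadj (2 * j + 1) (by omega))
    simpa [min_eq_left (show 2 * j + 1 ≤ p.length by omega), Sym2.eq_swap] using this
  have hsuffix : ω s(p.getVert (2 * j + 1), p.getVert (2 * j + 2)) ≤
      ω s(p.getVert (2 * j + 2), p.getVert (2 * j + 3)) := by
    have := weight_le_of_notMem_Aset hv (p.drop (2 * j + 2)).reverse (hpath.drop _).reverse
      ⟨m - j - 2, by rw [length_reverse, drop_length]; omega⟩ (hadj (2 * j + 1) (by omega)).symm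
    simpa [Sym2.eq_swap] using this
  rw [show 2 * (j + 1) - 1 = 2 * j + 1 by omega, support_getD_eq_getVert_s5 _ _ (by omega),
    support_getD_eq_getVert_s5 _ _ (by omega)]
  exact hroot.isSpecialEdge_of_weight_le htree (hadj (2 * j) (by omega)) (hadj _ (by omega))
    (hadj (2 * j + 2) (by omega)) (hne _ _ (by omega) (by omega) (by omega))
    (hne _ _ (by omega) (by omega) (by omega)) hprefix hsuffix

/-- **Lemma.** Let `(G_ω, r)` be an increasing weighted tree and `u, v ∉ A(G_ω)`. Then for
every simple path `u = v₁ → v₂ → ⋯ → v_{2m} = v` with `m ≥ 2`, every edge `v_{2i}v_{2i+1}`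
for `i ∈ {1,…,m-1}` is a special edge of `(G_ω, r)`. -/
theorem special_edges_on_path_outside_Aset {n : ℕ} (G : SimpleGraph (Fin n))
    [DecidableRel G.Adj] (ω : Sym2 (Fin n) → ℕ) (r : Fin n)
    (htree : G.IsTree) (hpos : ∀ e ∈ G.edgeSet, 1 ≤ ω e)
    (hroot : IsIncreasingRoot G ω r)
    (u v : Fin n) (hu : u ∉ Aset G ω) (hv : v ∉ Aset G ω)
    (m : ℕ) (hm : 2 ≤ m) (p : G.Walk u v)
    (hpath : p.IsPath) (hlen : p.support.length = 2 * m) :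
    ∀ i : ℕ, 1 ≤ i → i ≤ m - 1 →
      IsSpecialEdge G ω r s(p.support.getD (2 * i - 1) u, p.support.getD (2 * i) u) :=
  special_edges_on_path_outside_Aset_general G ω r htree hroot u v hu hv m p hpath hlen
end

section
/- Let (G_ω, r) be an increasing weighted tree with bipartition (U, V) of G, and let A(G_ω) be the set of vertices v admitting a simple path v = v₁ → ⋯ → v_{2m} with m ≥ 1 and ω(v_{2m−1}v_{2m}) < μ(v_{2m}). Then U ⊄ A(G_ω) and V ⊄ A(G_ω), i.e., neither side of the bipartition is entirely contained in A(G_ω). -/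
/-!
Orient the tree towards `r`. Along a leaf-to-root path the weights increase, and every
vertex lies on such a path through its parent, so the edge from a vertex to its parent is
its heaviest edge: `μ(w) ≤ ω(uw)` whenever `u` is the parent of `w`. A path out of `r`, and
a path out of the heaviest neighbour `x` of `r` other than the edge `xr` itself, only moves
away from the root, so its last edge joins some `w` to its parent and cannot be lighter
than `μ(w)`; the edge `xr` itself has weight `μ(r)`. Hence `r, x ∉ A(G_ω)`, and they lie on
opposite sides of the bipartition.
-/

open MvPolynomial SimpleGraph

namespace SimpleGraph

variable {V : Type*} {G : SimpleGraph V} {r u v w : V}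

def IsParent (G : SimpleGraph V) (r u v : V) : Prop :=
  ∃ p : G.Walk v r, p.IsPath ∧ ¬p.Nil ∧ p.snd = u

lemma Walk.getD_support_eq_getVert (p : G.Walk u v) {i : ℕ} (hi : i ≤ p.length) (d : V) :
    p.support.getD i d = p.getVert i := by
  rw [List.getD_eq_getElem _ _ (by rw [p.length_support]; omega),
    Walk.support_getElem_eq_getVert]

lemma not_isParent_root : ¬G.IsParent r u r := by
  rintro ⟨p, hp, hnil, -⟩
  exact hnil (Walk.isPath_iff_nil.mp hp)

lemma IsAcyclic.isParent_unique (hG : G.IsAcyclic) (hu : G.IsParent r u v)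
    (hw : G.IsParent r w v) : u = w := by
  obtain ⟨p, hp, -, rfl⟩ := hu
  obtain ⟨q, hq, -, rfl⟩ := hw
  rw [show p = q from congrArg Subtype.val ((hG.subsingleton_path v r).elim ⟨p, hp⟩ ⟨q, hq⟩)]

lemma IsTree.isParent_or_isParent (hG : G.IsTree) (h : G.Adj u v) :
    G.IsParent r u v ∨ G.IsParent r v u := by
  obtain ⟨p, hp⟩ := (hG.connected.preconnected u r).exists_isPath
  by_cases hv : v ∈ p.support
  · refine .inr ⟨p, hp, fun hnil => h.ne ?_, (hG.isAcyclic.eq_snd_of_adj_start hp h hv).symm⟩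
    simpa [Walk.nil_iff_support_eq.mp hnil, eq_comm] using hv
  · exact .inl ⟨.cons h.symm p, hp.cons hv, Walk.not_nil_cons, Walk.snd_cons p h.symm⟩

lemma IsTree.isParent_penultimate (hG : G.IsTree) {p : G.Walk v w} (hp : p.IsPath)
    (hnil : ¬p.Nil) (hsnd : ¬G.IsParent r p.snd v) : G.IsParent r p.penultimate w := by
  induction p with
  | nil => exact absurd Walk.Nil.nil hnil
  | @cons v y w h q ih =>
    rw [Walk.snd_cons] at hsnd
    have hy : G.IsParent r v y := (hG.isParent_or_isParent h).resolve_right hsnd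
    by_cases hq : q.Nil
    · obtain rfl := hq.eq
      rwa [hq.eq_nil, Walk.penultimate_cons_nil]
    rw [Walk.penultimate_cons_of_not_nil h q hq]
    refine ih hp.of_cons hq fun hq' => ?_
    have hv : q.snd = v := hG.isAcyclic.isParent_unique hq' hy
    exact (Walk.cons_isPath_iff h q).mp hp |>.2 (hv ▸ q.getVert_mem_support 1)

lemma IsAcyclic.exists_leaf_append_isPath [Fintype V] [DecidableRel G.Adj] (hG : G.IsAcyclic)
    {v w : V} {p : G.Walk v w} (hp : p.IsPath) (hnil : ¬p.Nil) :
    ∃ (ℓ : V) (q : G.Walk ℓ v), G.degree ℓ = 1 ∧ (q.append p).IsPath := by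
  by_cases hdeg : G.degree v = 1
  · exact ⟨v, .nil, hdeg, hp⟩
  obtain ⟨x, hx, hxsnd⟩ : ∃ x, G.Adj v x ∧ x ≠ p.snd := by
    have hsnd : p.snd ∈ G.neighborFinset v := by simpa using Walk.adj_snd hnil
    have hcard : 1 < (G.neighborFinset v).card := by
      have := Finset.card_pos.mpr ⟨_, hsnd⟩
      rw [card_neighborFinset_eq_degree] at this ⊢
      omega
    obtain ⟨x, hx, hne⟩ := Finset.exists_mem_ne hcard p.snd
    exact ⟨x, by simpa using hx, hne⟩
  have hxp : x ∉ p.support := fun hmem => hxsnd (hG.eq_snd_of_adj_start hp hx hmem)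
  have hxpath : (Walk.cons hx.symm p).IsPath := hp.cons hxp
  obtain ⟨ℓ, q, hℓ, hq⟩ := hG.exists_leaf_append_isPath hxpath Walk.not_nil_cons
  exact ⟨ℓ, q.concat hx.symm, hℓ, by rwa [Walk.concat_append]⟩
termination_by Fintype.card V - p.length
decreasing_by
  have := hxpath.length_lt
  rw [Walk.length_cons] at this ⊢
  omega

end SimpleGraph

lemma exists_isPath_of_mem_Aset {n : ℕ} {G : SimpleGraph (Fin n)} [DecidableRel G.Adj]
    {ω : Sym2 (Fin n) → ℕ} {v : Fin n} (hv : v ∈ Aset G ω) :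
    ∃ (w : Fin n) (p : G.Walk v w), p.IsPath ∧ ¬p.Nil ∧
      ω s(p.penultimate, w) < muWeight G ω w := by
  obtain ⟨m, w, p, hm, hp, hlen, hlt⟩ := hv
  rw [p.length_support] at hlen
  refine ⟨w, p, hp, Walk.not_nil_iff_lt_length.mpr (by omega), ?_⟩
  rwa [p.getD_support_eq_getVert (by omega), show 2 * m - 2 = p.length - 1 by omega] at hlt

namespace IsIncreasingRoot

variable {n : ℕ} {G : SimpleGraph (Fin n)} [DecidableRel G.Adj] {ω : Sym2 (Fin n) → ℕ}
  {r u v w : Fin n}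

lemma weight_le_weight_succ (hroot : IsIncreasingRoot G ω r) {ℓ : Fin n} (hℓ : G.degree ℓ = 1)
    {p : G.Walk ℓ r} (hp : p.IsPath) {i : ℕ} (hi : i + 2 ≤ p.length) :
    ω s(p.getVert i, p.getVert (i + 1)) ≤ ω s(p.getVert (i + 1), p.getVert (i + 2)) := by
  have h := hroot ℓ hℓ p hp i (by rw [p.length_support]; omega)
  rwa [p.getD_support_eq_getVert (by omega), p.getD_support_eq_getVert (by omega),
    p.getD_support_eq_getVert hi] at h

lemma weight_le_of_isParent (hroot : IsIncreasingRoot G ω r) (hG : G.IsAcyclic) {z : Fin n}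
    (huv : G.IsParent r u v) (hz : G.Adj z v) (hzu : z ≠ u) : ω s(z, v) ≤ ω s(v, u) := by
  obtain ⟨P, hP, hPnil, rfl⟩ := huv
  have hzP : z ∉ P.support := fun hmem => hzu (hG.eq_snd_of_adj_start hP hz.symm hmem)
  have hQ : (Walk.cons hz P).IsPath := hP.cons hzP
  -- `z → v → u → ⋯ → r` extends below `z` to a leaf, where `hroot` applies
  obtain ⟨ℓ, q, hℓ, hq⟩ := hG.exists_leaf_append_isPath hQ Walk.not_nil_cons
  have hP1 : 1 ≤ P.length := Walk.not_nil_iff_lt_length.mp hPnil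
  have h := hroot.weight_le_weight_succ hℓ hq (i := q.length) (by simp; omega)
  simpa [Walk.getVert_append] using h

lemma muWeight_le (hroot : IsIncreasingRoot G ω r) (hG : G.IsAcyclic) (huv : G.IsParent r u v) :
    muWeight G ω v ≤ ω s(u, v) :=
  Finset.sup_le fun z hz => by
    rw [mem_neighborFinset] at hz
    rcases eq_or_ne z u with rfl | hzu
    · exact le_rfl
    · exact (hroot.weight_le_of_isParent hG huv hz.symm hzu).trans_eq (congrArg ω Sym2.eq_swap)

lemma muWeight_le_penultimate (hroot : IsIncreasingRoot G ω r) (hG : G.IsTree)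
    {p : G.Walk v w} (hp : p.IsPath) (hnil : ¬p.Nil) (hsnd : ¬G.IsParent r p.snd v) :
    muWeight G ω w ≤ ω s(p.penultimate, w) :=
  hroot.muWeight_le hG.isAcyclic (hG.isParent_penultimate hp hnil hsnd)

lemma root_notMem_Aset (hroot : IsIncreasingRoot G ω r) (hG : G.IsTree) : r ∉ Aset G ω := by
  intro hr
  obtain ⟨w, p, hp, hnil, hlt⟩ := exists_isPath_of_mem_Aset hr
  exact (hroot.muWeight_le_penultimate hG hp hnil not_isParent_root).not_gt hlt

lemma notMem_Aset_of_adj_root (hroot : IsIncreasingRoot G ω r) (hG : G.IsTree) {x : Fin n}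
    (hx : G.Adj r x) (hmax : muWeight G ω r ≤ ω s(x, r)) : x ∉ Aset G ω := by
  intro hxA
  obtain ⟨w, p, hp, hnil, hlt⟩ := exists_isPath_of_mem_Aset hxA
  have hrx : G.IsParent r r x := (hG.isParent_or_isParent hx).resolve_right not_isParent_root
  cases p with
  | nil => exact hnil Walk.Nil.nil
  | @cons _ y _ h q =>
    by_cases hy : y = r
    · subst hy
      by_cases hq : q.Nil
      · obtain rfl := hq.eq
        rw [hq.eq_nil, Walk.penultimate_cons_nil] at hlt
        exact hlt.not_ge hmax
      · rw [Walk.penultimate_cons_of_not_nil h q hq] at hlt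
        exact (hroot.muWeight_le_penultimate hG hp.of_cons hq not_isParent_root).not_gt hlt
    · have hsnd : ¬G.IsParent r (Walk.cons h q).snd x := by
        rw [Walk.snd_cons]
        exact fun hyx => hy (hG.isAcyclic.isParent_unique hyx hrx)
      exact (hroot.muWeight_le_penultimate hG hp hnil hsnd).not_gt hlt

end IsIncreasingRoot

theorem bipartition_not_subset_Aset_general {n : ℕ} (G : SimpleGraph (Fin n))
    [DecidableRel G.Adj] (ω : Sym2 (Fin n) → ℕ) (r : Fin n)
    (hn : 2 ≤ n) (htree : G.IsTree)
    (hroot : IsIncreasingRoot G ω r)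
    (c : Fin n → Bool) (hc : ∀ i j : Fin n, G.Adj i j → c i ≠ c j) :
    ¬ ({v : Fin n | c v = true} ⊆ Aset G ω) ∧
      ¬ ({v : Fin n | c v = false} ⊆ Aset G ω) := by
  have : Nontrivial (Fin n) := Fin.nontrivial_iff_two_le.mpr hn
  obtain ⟨u, hu⟩ := htree.connected.preconnected.exists_adj_of_nontrivial r
  obtain ⟨x, hx, hmax⟩ :=
    (G.neighborFinset r).exists_mem_eq_sup ⟨u, by simpa using hu⟩ fun y => ω s(y, r)
  rw [mem_neighborFinset] at hx
  have hrA : r ∉ Aset G ω := hroot.root_notMem_Aset htree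
  have hxA : x ∉ Aset G ω := hroot.notMem_Aset_of_adj_root htree hx hmax.le
  have hcolor (b : Bool) : c r = b ∨ c x = b :=
    (by decide : ∀ a a' b : Bool, a ≠ a' → a = b ∨ a' = b) _ _ b (hc r x hx)
  have hside (b : Bool) : ¬ {v | c v = b} ⊆ Aset G ω := fun hsub =>
    (hcolor b).elim (fun h => hrA (hsub h)) (fun h => hxA (hsub h))
  exact ⟨hside true, hside false⟩

/-- **Lemma.** Let `(G_ω, r)` be an increasing weighted tree with bipartition `(U, V)`
(encoded by a proper 2-coloring `c`). Then neither side of the bipartition is entirely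
contained in `A(G_ω)`. -/
theorem bipartition_not_subset_Aset {n : ℕ} (G : SimpleGraph (Fin n))
    [DecidableRel G.Adj] (ω : Sym2 (Fin n) → ℕ) (r : Fin n)
    (hn : 2 ≤ n) (htree : G.IsTree) (hpos : ∀ e ∈ G.edgeSet, 1 ≤ ω e)
    (hroot : IsIncreasingRoot G ω r)
    (c : Fin n → Bool) (hc : ∀ i j : Fin n, G.Adj i j → c i ≠ c j) :
    ¬ ({v : Fin n | c v = true} ⊆ Aset G ω) ∧
      ¬ ({v : Fin n | c v = false} ⊆ Aset G ω) :=
  bipartition_not_subset_Aset_general G ω r hn htree hroot c hc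
end

section
/- Let (G_ω, r) be an increasing weighted tree where G is not a star centered at r, and suppose xy is a pendant edge of G with deg_G(y) = 1 and ω(xy) ≤ ω(xv) for every v ∈ N_G(x). Then (I(G_ω)^{t+1} : (xy)^{ω(xy)}) = I(G_ω)^t for all t ≥ 1. -/
open MvPolynomial SimpleGraph

/-- The edge ideal of the edge-weighted graph `(G, ω)`. -/
noncomputable def edgeIdeal {n : ℕ} (K : Type) [Field K] (G : SimpleGraph (Fin n))
    (ω : Sym2 (Fin n) → ℕ) : Ideal (MvPolynomial (Fin n) K) :=
  Ideal.span {f | ∃ i j : Fin n, G.Adj i j ∧ f = (X i * X j) ^ ω s(i, j)}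

/-- The graded maximal ideal of a polynomial ring. -/
noncomputable def maxIdeal (K : Type) [Field K] (σ : Type) : Ideal (MvPolynomial σ K) :=
  Ideal.span (Set.range (X : σ → MvPolynomial σ K))

/-- `depth (S/I)`, defined as the length of a longest regular sequence on `S/I`
consisting of elements of the graded maximal ideal. -/
noncomputable def quotDepth (K : Type) [Field K] {σ : Type} (I : Ideal (MvPolynomial σ K)) : ℕ :=
  sSup {k : ℕ | ∃ rs : List (MvPolynomial σ K), rs.length = k ∧
    (∀ x ∈ rs, x ∈ maxIdeal K σ) ∧
    RingTheory.Sequence.IsRegular (MvPolynomial σ K ⧸ I) rs}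

/-!
Both ideals are monomial ideals, so membership is decided exponentwise: `g ∈ I(G_ω)^t` iff every
exponent in the support of `g` dominates a sum of `t` edge exponents. Let `c` be the exponent of
`(xy)^{ω(xy)}` and suppose a sum of `t + 1` edge exponents lies below `ξ + c`. The only edge at
the leaf `y` is `xy` itself, and every other edge `xu` at `x` has `x`-weight `ω(xu) ≥ ω(xy)`; so
dropping a summand that meets `{x, y}` wherever some summand does leaves a sum of `t` edge
exponents below `ξ`.
-/

section MultisetSums

variable {α : Type*} [AddCommMonoid α]

def multisetSums (E : Set α) (t : ℕ) : Set α :=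
  {d | ∃ M : Multiset α, Multiset.card M = t ∧ (∀ e ∈ M, e ∈ E) ∧ M.sum = d}

theorem multisetSums_zero (E : Set α) : multisetSums E 0 = {0} := by
  ext d
  simp [multisetSums, eq_comm]

theorem sum_erase_mem_multisetSums [DecidableEq α] {E : Set α} {t : ℕ} {M : Multiset α}
    (hcard : Multiset.card M = t + 1) (hE : ∀ e ∈ M, e ∈ E) {e : α} (he : e ∈ M) :
    (M.erase e).sum ∈ multisetSums E t :=
  ⟨M.erase e, by simp [Multiset.card_erase_of_mem he, hcard],
    fun a ha => hE a (Multiset.mem_of_mem_erase ha), rfl⟩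

theorem mem_multisetSums_succ {E : Set α} {t : ℕ} {d : α} :
    d ∈ multisetSums E (t + 1) ↔ ∃ e ∈ E, ∃ d' ∈ multisetSums E t, e + d' = d := by
  classical
  constructor
  · rintro ⟨M, hcard, hE, rfl⟩
    obtain ⟨e, he⟩ := Multiset.card_pos_iff_exists_mem.mp (by rw [hcard]; exact t.succ_pos)
    exact ⟨e, hE e he, _, sum_erase_mem_multisetSums hcard hE he, Multiset.sum_erase he⟩
  · rintro ⟨e, he, _, ⟨M, hcard, hE, rfl⟩, rfl⟩
    refine ⟨e ::ₘ M, by simp [hcard], ?_, Multiset.sum_cons e M⟩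
    simpa [he] using hE

end MultisetSums

theorem Multiset.exists_mem_dominating_support_on_pair {V : Type*} {M : Multiset (V →₀ ℕ)}
    (hM : M ≠ 0) {x y : V} (hyx : ∀ e ∈ M, e y ≠ 0 → e x ≠ 0) :
    ∃ e ∈ M, ∀ e' ∈ M, ∀ v, v = x ∨ v = y → e' v ≠ 0 → e v ≠ 0 := by
  by_cases hy : ∃ e ∈ M, e y ≠ 0
  · obtain ⟨e, he, hey⟩ := hy
    exact ⟨e, he, by rintro e' - v (rfl | rfl) - <;> [exact hyx e he hey; exact hey]⟩
  push Not at hy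
  by_cases hx : ∃ e ∈ M, e x ≠ 0
  · obtain ⟨e, he, hex⟩ := hx
    exact ⟨e, he, by rintro e' he' v (rfl | rfl) h <;> [exact hex; exact absurd (hy e' he') h]⟩
  push Not at hx
  obtain ⟨e, he⟩ := Multiset.exists_mem_of_ne_zero hM
  refine ⟨e, he, fun e' he' v hv h => absurd ?_ h⟩
  rcases hv with rfl | rfl
  exacts [hx e' he', hy e' he']

namespace MvPolynomial

variable {σ R : Type*} [CommSemiring R]

theorem span_monomial_image_pow_s18 (E : Set (σ →₀ ℕ)) (t : ℕ) :
    Ideal.span ((monomial · (1 : R)) '' E) ^ t =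
      Ideal.span ((monomial · (1 : R)) '' multisetSums E t) := by
  induction t with
  | zero => simp [multisetSums_zero]
  | succ t ih =>
    rw [pow_succ', ih, Ideal.span_mul_span]
    congr 1
    ext f
    simp only [Set.mem_mul, Set.mem_image, mem_multisetSums_succ]
    constructor
    · rintro ⟨-, ⟨e, he, rfl⟩, -, ⟨d, hd, rfl⟩, rfl⟩
      exact ⟨e + d, ⟨e, he, d, hd, rfl⟩, by rw [monomial_mul, one_mul]⟩
    · rintro ⟨-, ⟨e, he, d, hd, rfl⟩, rfl⟩
      exact ⟨_, ⟨e, he, rfl⟩, _, ⟨d, hd, rfl⟩, by rw [monomial_mul, one_mul]⟩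

theorem support_mul_monomial_one (p : MvPolynomial σ R) (c : σ →₀ ℕ) :
    (p * monomial c 1).support = p.support.map (addRightEmbedding c) :=
  AddMonoidAlgebra.support_coeff_mul_single p 1 (by simp) c

theorem mul_monomial_one_mem_ideal_span_monomial_image {g : MvPolynomial σ R} {c : σ →₀ ℕ}
    {D : Set (σ →₀ ℕ)} :
    g * monomial c 1 ∈ Ideal.span ((monomial · (1 : R)) '' D) ↔
      ∀ ξ ∈ g.support, ∃ d ∈ D, d ≤ ξ + c := by
  simp [mem_ideal_span_monomial_image, support_mul_monomial_one]

theorem X_mul_X_pow (i j : σ) (k : ℕ) :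
    (X i * X j : MvPolynomial σ R) ^ k = monomial (Finsupp.single i k + Finsupp.single j k) 1 := by
  rw [X, X, monomial_mul, monomial_pow, one_mul, one_pow, nsmul_add, Finsupp.smul_single_one,
    Finsupp.smul_single_one]

end MvPolynomial

section EdgeExponents

variable {V : Type*}

noncomputable def edgeExponent (ω : Sym2 V → ℕ) (i j : V) : V →₀ ℕ :=
  Finsupp.single i (ω s(i, j)) + Finsupp.single j (ω s(i, j))

def edgeExponents (G : SimpleGraph V) (ω : Sym2 V → ℕ) : Set (V →₀ ℕ) :=
  {d | ∃ i j, G.Adj i j ∧ edgeExponent ω i j = d}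

theorem edgeExponent_comm (ω : Sym2 V → ℕ) (i j : V) :
    edgeExponent ω i j = edgeExponent ω j i := by
  rw [edgeExponent, edgeExponent, Sym2.eq_swap, add_comm]

theorem edgeExponent_apply_left_eq_right (ω : Sym2 V → ℕ) (i j : V) :
    edgeExponent ω i j i = edgeExponent ω i j j := by
  by_cases h : i = j
  · rw [h]
  · simp [edgeExponent, h, Ne.symm h]

theorem edgeExponent_apply_of_ne (ω : Sym2 V → ℕ) {i j v : V} (hi : v ≠ i) (hj : v ≠ j) :
    edgeExponent ω i j v = 0 := by
  simp [edgeExponent, Ne.symm hi, Ne.symm hj]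

theorem edgeExponent_apply_left_of_ne (ω : Sym2 V → ℕ) {i j : V} (h : i ≠ j) :
    edgeExponent ω i j i = ω s(i, j) := by
  simp [edgeExponent, Ne.symm h]

theorem exists_adj_eq_edgeExponent_of_apply_ne_zero {G : SimpleGraph V} {ω : Sym2 V → ℕ}
    {e : V →₀ ℕ} (he : e ∈ edgeExponents G ω) {v : V} (hv : e v ≠ 0) :
    ∃ u, G.Adj v u ∧ e = edgeExponent ω v u := by
  obtain ⟨i, j, hij, rfl⟩ := he
  by_cases hi : v = i
  · exact ⟨j, hi ▸ hij, hi ▸ rfl⟩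
  by_cases hj : v = j
  · exact ⟨i, hj ▸ hij.symm, hj ▸ edgeExponent_comm ω i j⟩
  exact absurd (edgeExponent_apply_of_ne ω hi hj) hv

end EdgeExponents

theorem edgeIdeal_eq_span_monomial {n : ℕ} (K : Type) [Field K] (G : SimpleGraph (Fin n))
    (ω : Sym2 (Fin n) → ℕ) :
    edgeIdeal K G ω = Ideal.span ((monomial · (1 : K)) '' edgeExponents G ω) := by
  simp only [edgeIdeal, edgeExponents, X_mul_X_pow]
  congr 1
  ext f
  simp [edgeExponent, eq_comm]

theorem edgeIdeal_pow_eq_span_monomial {n : ℕ} (K : Type) [Field K] (G : SimpleGraph (Fin n))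
    (ω : Sym2 (Fin n) → ℕ) (t : ℕ) :
    edgeIdeal K G ω ^ t =
      Ideal.span ((monomial · (1 : K)) '' multisetSums (edgeExponents G ω) t) := by
  rw [edgeIdeal_eq_span_monomial, span_monomial_image_pow_s18]

section Pendant

variable {V : Type*} {G : SimpleGraph V} {ω : Sym2 V → ℕ} {x y : V}

theorem edgeExponent_apply_le_of_apply_ne_zero (hadj : G.Adj x y)
    (hly : ∀ u, G.Adj y u → u = x) (hmin : ∀ v, G.Adj x v → ω s(x, y) ≤ ω s(x, v))
    {e : V →₀ ℕ} (he : e ∈ edgeExponents G ω) {v : V} (hv : e v ≠ 0) :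
    edgeExponent ω x y v ≤ e v := by
  obtain ⟨u, hvu, rfl⟩ := exists_adj_eq_edgeExponent_of_apply_ne_zero he hv
  by_cases hvx : v = x
  · subst hvx
    rw [edgeExponent_apply_left_of_ne ω hadj.ne, edgeExponent_apply_left_of_ne ω hvu.ne]
    exact hmin u hvu
  by_cases hvy : v = y
  · subst hvy
    rw [hly u hvu, edgeExponent_comm]
  · rw [edgeExponent_apply_of_ne ω hvx hvy]
    exact Nat.zero_le _

theorem apply_ne_zero_of_apply_leaf_ne_zero (hly : ∀ u, G.Adj y u → u = x) {e : V →₀ ℕ}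
    (he : e ∈ edgeExponents G ω) (hy : e y ≠ 0) : e x ≠ 0 := by
  obtain ⟨u, hyu, rfl⟩ := exists_adj_eq_edgeExponent_of_apply_ne_zero he hy
  obtain rfl := hly u hyu
  rwa [edgeExponent_apply_left_eq_right] at hy

theorem exists_mem_multisetSums_le_of_le_add_edgeExponent (hadj : G.Adj x y)
    (hly : ∀ u, G.Adj y u → u = x) (hmin : ∀ v, G.Adj x v → ω s(x, y) ≤ ω s(x, v))
    {t : ℕ} {d m : V →₀ ℕ} (hd : d ∈ multisetSums (edgeExponents G ω) (t + 1))
    (hle : d ≤ m + edgeExponent ω x y) :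
    ∃ d' ∈ multisetSums (edgeExponents G ω) t, d' ≤ m := by
  classical
  obtain ⟨M, hcard, hE, rfl⟩ := hd
  have hM : M ≠ 0 := by
    rintro rfl
    simp at hcard
  obtain ⟨e, heM, hdom⟩ := Multiset.exists_mem_dominating_support_on_pair hM
    fun e he => apply_ne_zero_of_apply_leaf_ne_zero hly (hE e he)
  refine ⟨_, sum_erase_mem_multisetSums hcard hE heM, fun v => ?_⟩
  have hv := hle v
  rw [← Multiset.sum_erase heM, Finsupp.add_apply, Finsupp.add_apply] at hv
  have hdrop : edgeExponent ω x y v ≤ e v ∨ (M.erase e).sum v = 0 := by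
    by_cases hev : e v = 0
    · by_cases hxy : v = x ∨ v = y
      · right
        by_contra h
        obtain ⟨e', he', he'v⟩ :=
          Finsupp.mem_support_multiset_sum v (Finsupp.mem_support_iff.mpr h)
        exact hdom e' (Multiset.mem_of_mem_erase he') v hxy (Finsupp.mem_support_iff.mp he'v) hev
      · push Not at hxy
        exact .inl (edgeExponent_apply_of_ne ω hxy.1 hxy.2 ▸ Nat.zero_le _)
    · exact .inl (edgeExponent_apply_le_of_apply_ne_zero hadj hly hmin (hE e heM) hev)
  omega

end Pendant

theorem colon_pendant_edge_general {n : ℕ} {K : Type} [Field K]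
    (G : SimpleGraph (Fin n)) [DecidableRel G.Adj] (ω : Sym2 (Fin n) → ℕ)
    (x y : Fin n) (hadj : G.Adj x y) (hleaf : G.degree y = 1)
    (hmin : ∀ v ∈ G.neighborSet x, ω s(x, y) ≤ ω s(x, v)) :
    ∀ t : ℕ, 1 ≤ t →
      Submodule.colon (edgeIdeal K G ω ^ (t + 1))
          ((Ideal.span {(X x * X y) ^ ω s(x, y)} : Ideal (MvPolynomial (Fin n) K)) :
            Set (MvPolynomial (Fin n) K)) =
        edgeIdeal K G ω ^ t := by
  intro t _
  have hly : ∀ u, G.Adj y u → u = x := fun u hu =>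
    (degree_eq_one_iff_existsUnique_adj.mp hleaf).unique hu hadj.symm
  have hxy : (X x * X y) ^ ω s(x, y) ∈ edgeIdeal K G ω :=
    Ideal.subset_span ⟨x, y, hadj, rfl⟩
  refine le_antisymm (fun g hg => ?_) fun g hg => Submodule.mem_colon.mpr fun f hf => ?_
  · have hgf := Submodule.mem_colon.mp hg _ (Ideal.mem_span_singleton_self _)
    rw [smul_eq_mul, X_mul_X_pow, edgeIdeal_pow_eq_span_monomial,
      mul_monomial_one_mem_ideal_span_monomial_image] at hgf
    rw [edgeIdeal_pow_eq_span_monomial, mem_ideal_span_monomial_image]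
    intro ξ hξ
    obtain ⟨d, hd, hle⟩ := hgf ξ hξ
    exact exists_mem_multisetSums_le_of_le_add_edgeExponent hadj hly hmin hd hle
  · rw [smul_eq_mul, pow_succ]
    exact Ideal.mul_mem_mul hg ((Ideal.span_singleton_le_iff_mem _).mpr hxy hf)

/-- **Lemma.** Let `(G_ω, r)` be an increasing weighted tree where `G` is not a star centered
at `r`, and let `xy` be a pendant edge with `deg(y) = 1` and `ω(xy) ≤ ω(xv)` for every
`v ∈ N(x)`. Then `(I(G_ω)^{t+1} : (xy)^{ω(xy)}) = I(G_ω)^t` for all `t ≥ 1`. -/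
theorem colon_pendant_edge {n : ℕ} {K : Type} [Field K]
    (G : SimpleGraph (Fin n)) [DecidableRel G.Adj] (ω : Sym2 (Fin n) → ℕ)
    (htree : G.IsTree) (hpos : ∀ e ∈ G.edgeSet, 1 ≤ ω e)
    (r : Fin n) (hroot : IsIncreasingRoot G ω r)
    (hnotstar : ¬ ∀ e ∈ G.edgeSet, r ∈ e)
    (x y : Fin n) (hadj : G.Adj x y) (hleaf : G.degree y = 1)
    (hmin : ∀ v ∈ G.neighborSet x, ω s(x, y) ≤ ω s(x, v)) :
    ∀ t : ℕ, 1 ≤ t →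
      Submodule.colon (edgeIdeal K G ω ^ (t + 1))
          ((Ideal.span {(X x * X y) ^ ω s(x, y)} : Ideal (MvPolynomial (Fin n) K)) :
            Set (MvPolynomial (Fin n) K)) =
        edgeIdeal K G ω ^ t :=
  colon_pendant_edge_general G ω x y hadj hleaf hmin
end
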